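/- arXiv:2303.16157 — 5 statements merged into one kernel-verified Lean document; each statement's English description precedes it below -/
import Mathlib

section
/- Let G be a finite abelian group of order n ≥ 10^{100}, let k ≥ 1, and let S ⊆ G × ℤ^k be a set of words with |S| ≤ 1000. Then the number of functions f : {1,…,k} → G that do not separate S (i.e., for which there exist distinct separable words w, w' ∈ S with π_f(w) = π_f(w')) is at most |S|² · n^{k − 1/5}. -/
/-!
If two separable words differ by `(g, z)` with `z ≠ 0`, there is `v ∈ ℤᵏ` with `z ⬝ᵥ v = ±1`
(a basis vector in case (a), `eᵢ + eⱼ` in case (c)). Translating `f` by `l ↦ v l • c` shifts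
`π_f(w) - π_f(w')` by `±c`, so `(f, c) ↦ f + (l ↦ v l • c)` injects
`{f | π_f(w) = π_f(w')} × G` into `Gᵏ`: each separable pair is identified by at most
`n^(k-1)` functions. A union bound over the `|S|²` pairs gives `|S|² n^(k-1) ≤ |S|² n^(k-1/5)`.
-/

open scoped Classical

/-- The projection of the word `w = (g, z) ∈ G × ℤᵏ` under `f : Fin k → G`, namely
`g + ∑ i, z i • f i`. -/
def proj {G : Type} [AddCommGroup G] {k : ℕ} (f : Fin k → G) (w : G × (Fin k → ℤ)) : G :=
  w.1 + ∑ i, w.2 i • f i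

/-- Two words `w, w'` with difference `(g, z)` are separable if (a) `z i ∈ {1,-1}` for
some `i`, or (b) `z = 0` and `g ≠ 0`, or (c) `z = 3eᵢ - 2eⱼ` or `z = 2eⱼ - 3eᵢ` for some
`i ≠ j`. -/
def Separable {G : Type} [AddCommGroup G] {k : ℕ} (w w' : G × (Fin k → ℤ)) : Prop :=
  (∃ i, (w - w').2 i = 1 ∨ (w - w').2 i = -1) ∨
  ((w - w').2 = 0 ∧ (w - w').1 ≠ 0) ∨
  (∃ i j, i ≠ j ∧
    ((w - w').2 = Pi.single i (3 : ℤ) - Pi.single j (2 : ℤ) ∨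
     (w - w').2 = Pi.single j (2 : ℤ) - Pi.single i (3 : ℤ)))

/-- `f` separates `S` if the projections under `f` of every separable pair of distinct
words of `S` are distinct. -/
def SeparatesSet {G : Type} [AddCommGroup G] {k : ℕ} (f : Fin k → G)
    (S : Finset (G × (Fin k → ℤ))) : Prop :=
  ∀ w ∈ S, ∀ w' ∈ S, w ≠ w' → Separable w w' → proj f w ≠ proj f w'

open Finset

variable {G : Type} [AddCommGroup G] {k : ℕ}

lemma proj_sub (f : Fin k → G) (w w' : G × (Fin k → ℤ)) :
    proj f (w - w') = proj f w - proj f w' := by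
  simp only [proj, Prod.fst_sub, Prod.snd_sub, Pi.sub_apply, sub_smul, sum_sub_distrib]
  abel

lemma proj_add_smul (f : Fin k → G) (v : Fin k → ℤ) (c : G) (d : G × (Fin k → ℤ)) :
    proj (f + fun l => v l • c) d = proj f d + (d.2 ⬝ᵥ v) • c := by
  simp only [proj, Pi.add_apply, smul_add, sum_add_distrib, dotProduct, sum_smul, mul_smul]
  abel

lemma Separable.exists_isUnit_dotProduct_or {w w' : G × (Fin k → ℤ)} (h : Separable w w') :
    (∃ v, IsUnit ((w - w').2 ⬝ᵥ v)) ∨ ((w - w').2 = 0 ∧ (w - w').1 ≠ 0) := by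
  rcases h with ⟨i, hi⟩ | hb | ⟨i, j, hij, hc | hc⟩
  · exact Or.inl ⟨Pi.single i 1, by rwa [dotProduct_single, mul_one, Int.isUnit_iff]⟩
  · exact Or.inr hb
  all_goals
    refine Or.inl ⟨Pi.single i 1 + Pi.single j 1, ?_⟩
    rw [hc]
    simp [hij, hij.symm]

variable [Fintype G]

lemma card_filter_proj_eq_zero_mul_card_le (d : G × (Fin k → ℤ)) {v : Fin k → ℤ}
    (hv : IsUnit (d.2 ⬝ᵥ v)) :
    #{f : Fin k → G | proj f d = 0} * Fintype.card G ≤ Fintype.card G ^ k := by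
  calc #{f : Fin k → G | proj f d = 0} * Fintype.card G
      = #(({f | proj f d = 0} : Finset (Fin k → G)) ×ˢ (univ : Finset G)) := by
        rw [card_product, card_univ]
    _ ≤ #(univ : Finset (Fin k → G)) := by
        refine card_le_card_of_injOn (fun p => p.1 + fun l => v l • p.2)
          (fun _ _ => mem_coe.2 (mem_univ _)) ?_
        rintro ⟨f, c⟩ hf ⟨f', c'⟩ hf' h
        simp only [coe_product, coe_filter, coe_univ, Set.mem_prod, Set.mem_ofPred_eq,
          Set.mem_univ, and_true] at hf hf'
        have hc : c = c' := by
          have := congrArg (proj · d) h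
          simp only [proj_add_smul, hf, hf', zero_add] at this
          exact hv.smul_left_cancel.1 this
        subst hc
        exact Prod.ext (add_right_cancel h) rfl
    _ = Fintype.card G ^ k := by simp

lemma card_filter_proj_eq_mul_card_le {w w' : G × (Fin k → ℤ)} (h : Separable w w') :
    #{f : Fin k → G | proj f w = proj f w'} * Fintype.card G ≤ Fintype.card G ^ k := by
  have hfilter : ({f | proj f w = proj f w'} : Finset (Fin k → G)) =
      ({f | proj f (w - w') = 0} : Finset (Fin k → G)) := by
    simp only [proj_sub, sub_eq_zero]
  rw [hfilter]
  rcases h.exists_isUnit_dotProduct_or with ⟨v, hv⟩ | ⟨hz, hg⟩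
  · exact card_filter_proj_eq_zero_mul_card_le _ hv
  · have hempty : ({f | proj f (w - w') = 0} : Finset (Fin k → G)) = ∅ :=
      filter_eq_empty_iff.2 fun f _ => by
        simpa only [proj, hz, Pi.zero_apply, zero_smul, sum_const_zero, add_zero] using hg
    rw [hempty, card_empty, zero_mul]
    exact Nat.zero_le _

lemma card_not_separatesSet_mul_card_le (S : Finset (G × (Fin k → ℤ))) :
    #{f : Fin k → G | ¬SeparatesSet f S} * Fintype.card G
      ≤ #S ^ 2 * Fintype.card G ^ k := by
  set P := (S ×ˢ S).filter fun p => Separable p.1 p.2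
  have hcover : ({f | ¬SeparatesSet f S} : Finset (Fin k → G)) ⊆
      P.biUnion fun p => {f : Fin k → G | proj f p.1 = proj f p.2} := by
    intro f hf
    simp only [SeparatesSet, mem_filter, mem_univ, true_and, not_forall, not_not] at hf
    obtain ⟨w, hw, w', hw', -, hsep, heq⟩ := hf
    exact mem_biUnion.2 ⟨(w, w'), mem_filter.2 ⟨mem_product.2 ⟨hw, hw'⟩, hsep⟩,
      mem_filter.2 ⟨mem_univ _, heq⟩⟩
  calc #{f : Fin k → G | ¬SeparatesSet f S} * Fintype.card G
      ≤ (∑ p ∈ P, #{f : Fin k → G | proj f p.1 = proj f p.2}) * Fintype.card G :=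
        Nat.mul_le_mul_right _ ((card_le_card hcover).trans card_biUnion_le)
    _ = ∑ p ∈ P, #{f : Fin k → G | proj f p.1 = proj f p.2} * Fintype.card G := sum_mul ..
    _ ≤ #P * Fintype.card G ^ k :=
        sum_le_card_nsmul P _ _ fun _ hp => card_filter_proj_eq_mul_card_le (mem_filter.1 hp).2
    _ ≤ #S ^ 2 * Fintype.card G ^ k :=
        Nat.mul_le_mul_right _ (by simpa [sq] using card_filter_le (S ×ˢ S) _)

theorem count_nonseparating_projections_general
    (G : Type) [AddCommGroup G] [Fintype G]
    (k : ℕ)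
    (S : Finset (G × (Fin k → ℤ))) :
    ((Finset.univ.filter (fun f : Fin k → G => ¬ SeparatesSet f S)).card : ℝ)
      ≤ (S.card : ℝ) ^ 2 * (Fintype.card G : ℝ) ^ ((k : ℝ) - 1 / 5) := by
  have hn : (1 : ℝ) ≤ Fintype.card G := by exact_mod_cast Fintype.card_pos
  have hcount : (#{f : Fin k → G | ¬SeparatesSet f S} : ℝ) * Fintype.card G
      ≤ #S ^ 2 * (Fintype.card G : ℝ) ^ k := by
    exact_mod_cast card_not_separatesSet_mul_card_le S
  have hroot : (Fintype.card G : ℝ) ^ (1 / 5 : ℝ) ≤ Fintype.card G := by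
    simpa using Real.rpow_le_rpow_of_exponent_le hn (by norm_num : (1 / 5 : ℝ) ≤ 1)
  calc (#{f : Fin k → G | ¬SeparatesSet f S} : ℝ)
      ≤ #S ^ 2 * (Fintype.card G : ℝ) ^ k / Fintype.card G := by
        rwa [le_div_iff₀ (by positivity)]
    _ ≤ #S ^ 2 * (Fintype.card G : ℝ) ^ k / (Fintype.card G : ℝ) ^ (1 / 5 : ℝ) :=
        div_le_div_of_nonneg_left (by positivity) (by positivity) hroot
    _ = #S ^ 2 * (Fintype.card G : ℝ) ^ ((k : ℝ) - 1 / 5) := by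
        rw [Real.rpow_sub (by positivity), Real.rpow_natCast, mul_div_assoc]

/-- At most `|S|² · n^(k - 1/5)` functions `f : Fin k → G` fail to separate `S`. -/
theorem count_nonseparating_projections
    (G : Type) [AddCommGroup G] [Fintype G] [DecidableEq G]
    (hn : 10 ^ 100 ≤ Fintype.card G) (k : ℕ) (hk : 1 ≤ k)
    (S : Finset (G × (Fin k → ℤ))) (hS : S.card ≤ 1000) :
    ((Finset.univ.filter (fun f : Fin k → G => ¬ SeparatesSet f S)).card : ℝ)
      ≤ (S.card : ℝ) ^ 2 * (Fintype.card G : ℝ) ^ ((k : ℝ) - 1 / 5) :=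
  count_nonseparating_projections_general G k S
end

section
/- There exists an absolute constant C such that the following holds. Let G be a finite abelian group (written additively) of order n ≥ 10^{100} and let k be an integer with 10 ≤ k ≤ n^{0.001}. Then there exist elements f, s ∈ G, an integer z ∈ {2,3,4,5}, and tuples F₁,…,F_t and S₁,…,S_t of elements of G with t = ⌊n/(kC)⌋ such that: (1) the tuples F₁,…,F_t are pairwise disjoint (no common entries) and the tuples S₁,…,S_t are pairwise disjoint; (2) each F_i is a 4-tuple whose entries sum to f; (3) each S_i is a z-tuple whose entries sum to s, each S_i is a rainbow path-candidate, and the family (S₁,…,S_t) is near-dissociable; (4) 4 divides k − 4 − z, and the element q := −((k − 4 − z)/4)·f − s is nonzero; (5) each F_i is the concatenation of two 2-tuples F_i⁺ and F_i⁻, each of which is a rainbow path-candidate; the family (F₁⁺,…,F_t⁺) is dissociable, the family (F₁⁻,…,F_t⁻) is dissociable, each F_i is a rainbow path-candidate, and the family (F₁,…,F_t) is near-dissociable; (6) for every integer m with 0 ≤ m ≤ k and every i, the tuples F_i⁺ and F_i⁻ are separable at distance q + m·f. -/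
/-- The partial sum `c₁ + ⋯ + cⱼ` of the first `j` entries of the tuple `c`. -/
def partialSum {G : Type} [AddCommGroup G] {k : ℕ} (c : Fin k → G) (j : ℕ) : G :=
  ∑ i ∈ Finset.univ.filter (fun i : Fin k => (i : ℕ) < j), c i

/-- `(c₁, …, c_k)` is a path-candidate if its `k+1` partial sums are pairwise distinct. -/
def IsPathCandidate {G : Type} [AddCommGroup G] {k : ℕ} (c : Fin k → G) : Prop :=
  ∀ j j', j ≤ k → j' ≤ k → j ≠ j' → partialSum c j ≠ partialSum c j'

/-- Two tuples are dissociable if no nonempty initial partial sum of the first equals a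
nonempty initial partial sum of the second. -/
def DissociablePair {G : Type} [AddCommGroup G] {a b : ℕ}
    (c : Fin a → G) (d : Fin b → G) : Prop :=
  ∀ j j', 1 ≤ j → j ≤ a → 1 ≤ j' → j' ≤ b → partialSum c j ≠ partialSum d j'

/-- Near-dissociability: as dissociability but only for proper initial partial sums. -/
def NearDissociablePair {G : Type} [AddCommGroup G] {a b : ℕ}
    (c : Fin a → G) (d : Fin b → G) : Prop :=
  ∀ j j', 1 ≤ j → j ≤ a - 1 → 1 ≤ j' → j' ≤ b - 1 → partialSum c j ≠ partialSum d j'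

/-- Two tuples are separable at distance `dist` if no sum of a nonempty initial partial
sum of each lies in `{dist, -dist}`. -/
def SeparableAtDist {G : Type} [AddCommGroup G] {a b : ℕ}
    (c : Fin a → G) (d : Fin b → G) (dist : G) : Prop :=
  ∀ j j', 1 ≤ j → j ≤ a → 1 ≤ j' → j' ≤ b →
    partialSum c j + partialSum d j' ≠ dist ∧
    partialSum c j + partialSum d j' ≠ -dist

/-!
The tuples are built greedily. A `z`-tuple with sum `s` is encoded by its path of partial sums
`0 = P 0, P 1, …, P z = s`, and the interior values `P l` are chosen one at a time. Every
requirement of the theorem (path-candidate, rainbow, disjointness from and (near-)dissociability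
with the tuples already chosen, separability of the two halves of an `F`-tuple at the distances
`q + m • f`) forbids only `O(t + k + √n)` values of the next `P l`, far fewer than `n`.

The one requirement that is not affine in `P l` is that the last two entries `P l - P (l-1)` and
`s - P l` differ: it forbids a fibre of `g ↦ g + g`. As `#G[2] * #(2G) = n`, either all these
fibres or the set `2G` of non-empty ones has at most `√n` elements; so there is a set `E` with
`#E ≤ √n` off which the fibres are small, and `s`, `f` and the `P l` are kept off (a translate of) `E`.
-/

open Finset

section PartialSum

variable {G : Type} [AddCommGroup G]

@[simp]
lemma partialSum_zero {k : ℕ} (c : Fin k → G) : partialSum c 0 = 0 := by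
  simp [partialSum]

lemma partialSum_succ {k : ℕ} (c : Fin k → G) {j : ℕ} (hj : j < k) :
    partialSum c (j + 1) = partialSum c j + c ⟨j, hj⟩ := by
  have : univ.filter (fun i : Fin k => (i : ℕ) < j + 1) =
      insert ⟨j, hj⟩ (univ.filter fun i : Fin k => (i : ℕ) < j) := by
    ext i
    simp only [mem_filter, mem_univ, true_and, mem_insert, Fin.ext_iff]
    omega
  rw [partialSum, this, sum_insert (by simp), add_comm]
  rfl

lemma partialSum_of_le {k : ℕ} (c : Fin k → G) {j : ℕ} (hj : k ≤ j) :
    partialSum c j = ∑ i, c i := by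
  rw [partialSum, filter_true_of_mem fun i _ => i.isLt.trans_le hj]

lemma partialSum_castAdd {a b : ℕ} (c : Fin (a + b) → G) {j : ℕ} (hj : j ≤ a) :
    partialSum (fun i : Fin a => c (Fin.castAdd b i)) j = partialSum c j := by
  induction j with
  | zero => simp
  | succ j ih =>
    rw [partialSum_succ _ (by omega), partialSum_succ c (by omega), ih (by omega)]
    rfl

lemma partialSum_natAdd {a b : ℕ} (c : Fin (a + b) → G) {j : ℕ} (hj : j ≤ b) :
    partialSum (fun i : Fin b => c (Fin.natAdd a i)) j =
      partialSum c (a + j) - partialSum c a := by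
  induction j with
  | zero => simp
  | succ j ih =>
    rw [partialSum_succ _ (by omega), ← add_assoc, partialSum_succ c (by omega), ih (by omega)]
    simp only [Fin.natAdd_mk]
    abel

def pathTuple (z : ℕ) (P : ℕ → G) : Fin z → G := fun j => P (j + 1) - P j

lemma partialSum_pathTuple {z j : ℕ} {P : ℕ → G} (h0 : P 0 = 0) (hj : j ≤ z) :
    partialSum (pathTuple z P) j = P j := by
  induction j with
  | zero => simp [h0]
  | succ j ih =>
    rw [partialSum_succ _ (by omega), ih (by omega)]
    simp [pathTuple]

/-- The path `0, x 0, x 1, …, x (z - 2), s, s, …`. -/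
def pathOf (z : ℕ) (s : G) (x : ℕ → G) : ℕ → G
  | 0 => 0
  | j + 1 => if j + 1 < z then x j else s

lemma pathOf_congr {z l : ℕ} {s : G} {x y : ℕ → G} (h : ∀ j < l, x j = y j) :
    ∀ j ≤ l, pathOf z s x j = pathOf z s y j
  | 0, _ => rfl
  | j + 1, hj => by simp only [pathOf, h j hj]

lemma IsPathCandidate.of_lt {k : ℕ} {c : Fin k → G}
    (h : ∀ j j', j < j' → j' ≤ k → partialSum c j ≠ partialSum c j') : IsPathCandidate c := by
  intro j j' hj hj' hne
  rcases Nat.lt_or_gt_of_ne hne with hlt | hlt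
  · exact h j j' hlt hj'
  · exact (h j' j hlt hj).symm

lemma IsPathCandidate.castAdd {a b : ℕ} {c : Fin (a + b) → G} (hc : IsPathCandidate c) :
    IsPathCandidate fun i : Fin a => c (Fin.castAdd b i) := by
  intro j j' hj hj' hne
  rw [partialSum_castAdd c hj, partialSum_castAdd c hj']
  exact hc j j' (by omega) (by omega) hne

lemma IsPathCandidate.natAdd {a b : ℕ} {c : Fin (a + b) → G} (hc : IsPathCandidate c) :
    IsPathCandidate fun i : Fin b => c (Fin.natAdd a i) := by
  intro j j' hj hj' hne
  rw [partialSum_natAdd c hj, partialSum_natAdd c hj', Ne, sub_left_inj]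
  exact hc _ _ (by omega) (by omega) (by omega)

lemma NearDissociablePair.symm {a b : ℕ} {c : Fin a → G} {d : Fin b → G}
    (h : NearDissociablePair c d) : NearDissociablePair d c :=
  fun j j' h₁ h₂ h₃ h₄ => (h j' j h₃ h₄ h₁ h₂).symm

lemma DissociablePair.symm {a b : ℕ} {c : Fin a → G} {d : Fin b → G}
    (h : DissociablePair c d) : DissociablePair d c :=
  fun j j' h₁ h₂ h₃ h₄ => (h j' j h₃ h₄ h₁ h₂).symm

lemma NearDissociablePair.dissociablePair_castAdd {a a' b b' : ℕ} {c : Fin (a + b) → G}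
    {d : Fin (a' + b') → G} (h : NearDissociablePair c d) (hb : 0 < b) (hb' : 0 < b') :
    DissociablePair (fun i : Fin a => c (Fin.castAdd b i))
      (fun i : Fin a' => d (Fin.castAdd b' i)) := by
  intro j j' h₁ h₂ h₃ h₄
  rw [partialSum_castAdd c h₂, partialSum_castAdd d h₄]
  exact h j j' h₁ (by omega) h₃ (by omega)

end PartialSum

section Greedy

theorem exists_forall_notMem_of_card_lt {α : Type*} [Fintype α] [Nonempty α] (N : ℕ)
    (bad : ℕ → (ℕ → α) → Finset α)
    (hbad : ∀ l x y, (∀ j < l, x j = y j) → bad l x = bad l y)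
    (hcard : ∀ l < N, ∀ x, (∀ j < l, x j ∉ bad j x) → #(bad l x) < Fintype.card α) :
    ∃ x : ℕ → α, ∀ l < N, x l ∉ bad l x := by
  induction N with
  | zero => exact ⟨fun _ => Classical.arbitrary α, by simp⟩
  | succ N ih =>
    obtain ⟨x, hx⟩ := ih fun l hl => hcard l (by omega)
    obtain ⟨v, -, hv⟩ := exists_mem_notMem_of_card_lt_card (t := univ)
      (by simpa using hcard N (by omega) x hx)
    refine ⟨Function.update x N v, fun l hl => ?_⟩
    rw [hbad l _ x fun j hj => Function.update_of_ne (by omega) _ _]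
    rcases Nat.lt_succ_iff_lt_or_eq.mp hl with hl | rfl
    · rw [Function.update_of_ne (by omega)]
      exact hx l hl
    · rwa [Function.update_self]

theorem exists_pairwise_of_forall_exists {T : Type*} (p : T → Prop) (r : T → T → Prop)
    (hr : ∀ x y, r x y → r y x) (t : ℕ)
    (h : ∀ S : Finset T, #S < t → ∃ y, p y ∧ ∀ x ∈ S, r x y) :
    ∃ x : Fin t → T, (∀ i, p (x i)) ∧ ∀ i j, i ≠ j → r (x i) (x j) := by
  classical
  induction t with
  | zero => exact ⟨finZeroElim, finZeroElim, finZeroElim⟩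
  | succ t ih =>
    obtain ⟨x, hpx, hrx⟩ := ih fun S hS => h S (by omega)
    obtain ⟨y, hpy, hry⟩ := h (univ.image x) (card_image_le.trans_lt (by simp))
    have hry' : ∀ i, r (x i) y := fun i => hry _ (mem_image_of_mem _ (mem_univ i))
    refine ⟨Fin.cons y x, Fin.cases hpy hpx, fun i j hij => ?_⟩
    cases i using Fin.cases <;> cases j using Fin.cases
    · exact absurd rfl hij
    · exact hr _ _ (hry' _)
    · exact hry' _
    · exact hrx _ _ ((Fin.succ_injective t).ne_iff.mp hij)

end Greedy

section Doubling

variable {G : Type} [AddCommGroup G] [Fintype G] [DecidableEq G]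

def DoublingFiberBound (E : Finset G) (m : ℕ) : Prop :=
  ∀ w ∉ E, #{g : G | g + g = w} ≤ m

theorem exists_doublingFiberBound_sqrt :
    ∃ E : Finset G, #E ≤ Nat.sqrt (Fintype.card G) ∧
      DoublingFiberBound E (Nat.sqrt (Fintype.card G)) := by
  let double : G →+ G := AddMonoidHom.id G + AddMonoidHom.id G
  let D : Finset G := univ.image double
  let T : Finset G := {g : G | g + g = 0}
  have hfiber : ∀ w ∈ D, #{g : G | g + g = w} = #T := fun w hw =>
    AddMonoidHom.card_fiber_eq_of_mem_range double (by simpa [D] using hw) ⟨0, map_zero _⟩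
  have hempty : ∀ w ∉ D, #{g : G | g + g = w} = 0 := fun w hw =>
    card_eq_zero.mpr (filter_eq_empty_iff.mpr fun g _ hg => hw (mem_image.mpr ⟨g, mem_univ g, hg⟩))
  have hcard : #D * #T = Fintype.card G := by
    have : Fintype.card G = ∑ w ∈ D, #{g : G | g + g = w} :=
      card_eq_sum_card_fiberwise (f := double) fun g _ => mem_image_of_mem _ (mem_univ g)
    rw [this, sum_congr rfl hfiber, sum_const, smul_eq_mul]
  by_cases hTD : #T ≤ #D
  · refine ⟨∅, by simp, fun w _ => ?_⟩
    by_cases hw : w ∈ D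
    · exact (hfiber w hw).trans_le (Nat.le_sqrt.mpr (hcard ▸ Nat.mul_le_mul_right _ hTD))
    · exact (hempty w hw).trans_le (Nat.zero_le _)
  · refine ⟨D, Nat.le_sqrt.mpr (hcard ▸ Nat.mul_le_mul_left _ (not_le.mp hTD).le),
      fun w hw => (hempty w hw).trans_le (Nat.zero_le _)⟩

end Doubling

section Tuple

variable {G : Type} [AddCommGroup G] [Fintype G] [DecidableEq G]

/-- The values forbidden for `P (l + 1)` given `P 0, …, P l`: the earlier path values; those making
the new entry `P (l + 1) - P l` or the closing entry `s - P (l + 1)` equal to an earlier entry, to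
each other, or to an element of `A`; and `E - s`, so that the doubling fibre met at the next step
is small. -/
def forbiddenNext (s : G) (E A : Finset G) (l : ℕ) (P : ℕ → G) : Finset G :=
  {0, s} ∪
    (range l).biUnion (fun j => {P (j + 1), P l + (P (j + 1) - P j), s - (P (j + 1) - P j)}) ∪
    ({g : G | g + g = s + P l} : Finset G) ∪ E.image (· - s) ∪ A.image (P l + ·) ∪
    A.image (s - ·)

lemma of_notMem_forbiddenNext {s g : G} {E A : Finset G} {l : ℕ} {P : ℕ → G}
    (h : g ∉ forbiddenNext s E A l P) :
    g ≠ 0 ∧ g ≠ s ∧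
      (∀ j < l, g ≠ P (j + 1) ∧ g - P l ≠ P (j + 1) - P j ∧ s - g ≠ P (j + 1) - P j) ∧
      s - g ≠ g - P l ∧ s + g ∉ E ∧ g - P l ∉ A ∧ s - g ∉ A := by
  simp only [forbiddenNext, mem_union, mem_insert, mem_singleton, mem_biUnion, mem_range,
    mem_filter, mem_univ, true_and, mem_image, not_or, not_exists, not_and] at h
  obtain ⟨⟨⟨⟨⟨⟨h0, hs⟩, hprev⟩, hdouble⟩, hE⟩, hA⟩, hA'⟩ := h
  refine ⟨h0, hs, fun j hj => ⟨(hprev j hj).1, fun h' => (hprev j hj).2.1 ?_,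
    fun h' => (hprev j hj).2.2 ?_⟩, fun h' => hdouble (sub_eq_sub_iff_add_eq_add.mp h').symm,
    fun h' => hE _ h' (by abel), fun h' => hA _ h' (by abel), fun h' => hA' _ h' (by abel)⟩
  all_goals rw [← h']; abel

lemma card_forbiddenNext_le {s : G} {E A : Finset G} {m l : ℕ} {P : ℕ → G}
    (hfib : DoublingFiberBound E m) (hl : s + P l ∉ E) :
    #(forbiddenNext s E A l P) ≤ 2 + 3 * l + m + #E + 2 * #A := by
  unfold forbiddenNext
  grw [card_union_le, card_union_le, card_union_le, card_union_le, card_union_le, card_le_two,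
    card_biUnion_le_card_mul _ _ 3 fun _ _ => card_le_three, hfib _ hl, card_image_le,
    card_image_le, card_image_le, card_range]
  omega

lemma forbiddenNext_congr {s : G} {E A : Finset G} {l : ℕ} {P Q : ℕ → G}
    (h : ∀ j ≤ l, P j = Q j) : forbiddenNext s E A l P = forbiddenNext s E A l Q := by
  unfold forbiddenNext
  rw [h l le_rfl, biUnion_congr rfl fun j hj => by
    rw [h j (by simp at hj; omega), h (j + 1) (by simp at hj; omega)]]

section AvoidingPath

variable {s : G} {E A : Finset G} {z : ℕ} {P : ℕ → G}

lemma injective_pathTuple (hz : 2 ≤ z) (hPz : P z = s)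
    (hP : ∀ l, l + 1 < z → P (l + 1) ∉ forbiddenNext s E A l P) :
    Function.Injective (pathTuple z P) := by
  obtain ⟨z, rfl⟩ := Nat.exists_eq_add_of_le' hz
  refine Function.Injective.of_lt_imp_ne fun ⟨a, ha⟩ ⟨b, hb⟩ hab => ?_
  rw [Fin.mk_lt_mk] at hab
  simp only [pathTuple]
  rcases Nat.lt_or_ge (b + 1) (z + 2) with hb' | hb'
  · obtain ⟨-, -, hprev, -⟩ := of_notMem_forbiddenNext (hP b hb')
    exact fun h => (hprev a hab).2.1 h.symm
  · obtain rfl : b = z + 1 := by omega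
    obtain ⟨-, -, hprev, hdouble, -⟩ := of_notMem_forbiddenNext (hP z (by omega))
    rw [hPz]
    rcases Nat.lt_or_ge a z with ha' | ha'
    · exact fun h => (hprev a ha').2.2 h.symm
    · obtain rfl : a = z := by omega
      exact fun h => hdouble h.symm

lemma isPathCandidate_pathTuple (hs : s ≠ 0) (h0 : P 0 = 0) (hPz : P z = s)
    (hP : ∀ l, l + 1 < z → P (l + 1) ∉ forbiddenNext s E A l P) :
    IsPathCandidate (pathTuple z P) := by
  refine IsPathCandidate.of_lt fun j j' hjj' hj' => ?_
  rw [partialSum_pathTuple h0 (by omega), partialSum_pathTuple h0 hj']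
  obtain ⟨l, rfl⟩ := Nat.exists_eq_add_of_le' (Nat.one_le_of_lt hjj')
  rcases Nat.lt_or_ge (l + 1) z with hl | hl
  · obtain ⟨hne0, -, hprev, -⟩ := of_notMem_forbiddenNext (hP l hl)
    cases j with
    | zero => exact h0 ▸ hne0.symm
    | succ j => exact (hprev j (by omega)).1.symm
  · obtain rfl : z = l + 1 := by omega
    rw [hPz]
    cases j with
    | zero => exact h0 ▸ hs.symm
    | succ j => exact (of_notMem_forbiddenNext (hP j (by omega))).2.1

lemma pathTuple_notMem (hz : 2 ≤ z) (hPz : P z = s)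
    (hP : ∀ l, l + 1 < z → P (l + 1) ∉ forbiddenNext s E A l P) (j : Fin z) :
    pathTuple z P j ∉ A := by
  obtain ⟨j, hj⟩ := j
  rcases Nat.lt_or_ge (j + 1) z with hj' | hj'
  · obtain ⟨-, -, -, -, -, hA, -⟩ := of_notMem_forbiddenNext (hP j hj')
    exact hA
  · obtain ⟨z, rfl⟩ := Nat.exists_eq_add_of_le' hz
    obtain rfl : j = z + 1 := by omega
    obtain ⟨-, -, -, -, -, -, hA⟩ := of_notMem_forbiddenNext (hP z (by omega))
    simpa only [pathTuple, hPz] using hA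

end AvoidingPath

theorem exists_rainbow_pathCandidate {z : ℕ} (hz : 2 ≤ z) {s : G} (hs : s ≠ 0) {E : Finset G}
    {m : ℕ} (hfib : DoublingFiberBound E m) (hsE : s ∉ E) (A : Finset G)
    (extra : ℕ → (ℕ → G) → Finset G) (K : ℕ)
    (hextra : ∀ l P Q, (∀ j < l, P j = Q j) → extra l P = extra l Q)
    (hK : ∀ l P, #(extra l P) ≤ K) (hcard : 2 + 3 * z + m + #E + 2 * #A + K < Fintype.card G) :
    ∃ c : Fin z → G, ∑ j, c j = s ∧ Function.Injective c ∧ IsPathCandidate c ∧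
      (∀ j, c j ∉ A) ∧ ∀ l, 0 < l → l < z → partialSum c l ∉ extra l (partialSum c) := by
  have : Nonempty G := ⟨0⟩
  obtain ⟨x, hx⟩ := exists_forall_notMem_of_card_lt (z - 1)
    (fun l x => forbiddenNext s E A l (pathOf z s x) ∪ extra (l + 1) (pathOf z s x))
    (fun l x y h => by
      rw [forbiddenNext_congr (pathOf_congr h),
        hextra _ _ _ fun j hj => pathOf_congr h j (by omega)])
    (fun l hl x hprev => by
      have hE : s + pathOf z s x l ∉ E := by
        cases l with
        | zero => simpa [pathOf] using hsE
        | succ l =>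
          obtain ⟨-, -, -, -, hE, -⟩ :=
            of_notMem_forbiddenNext (notMem_union.mp (hprev l (by omega))).1
          simpa [pathOf, show l + 1 < z by omega] using hE
      grw [card_union_le, card_forbiddenNext_le hfib hE, hK]
      omega)
  set P := pathOf z s x
  have hP : ∀ l, l + 1 < z → P (l + 1) ∉ forbiddenNext s E A l P ∪ extra (l + 1) P :=
    fun l hl => by simpa [P, pathOf, hl] using hx l (by omega)
  have hPz : P z = s := by
    obtain ⟨z, rfl⟩ := Nat.exists_eq_add_of_le' (Nat.one_le_of_lt hz)
    simp [P, pathOf]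
  have hP' : ∀ l, l + 1 < z → P (l + 1) ∉ forbiddenNext s E A l P := fun l hl =>
    (notMem_union.mp (hP l hl)).1
  have hps : ∀ j ≤ z, partialSum (pathTuple z P) j = P j := fun j => partialSum_pathTuple rfl
  refine ⟨pathTuple z P, ?_, injective_pathTuple hz hPz hP',
    isPathCandidate_pathTuple hs rfl hPz hP', pathTuple_notMem hz hPz hP', fun l hl0 hlz => ?_⟩
  · rw [← partialSum_of_le _ le_rfl, hps z le_rfl, hPz]
  · obtain ⟨l, rfl⟩ := Nat.exists_eq_add_of_le' hl0
    rw [hextra _ _ P fun j hj => hps j (by omega), hps _ hlz.le]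
    exact (notMem_union.mp (hP l hlz)).2

end Tuple

section Halves

variable {G : Type} [AddCommGroup G] [DecidableEq G]

/-- The values forbidden for `P l` when building a 4-tuple `y` with sum `f` and partial sums `P`:
besides `B`, those that would put a sum of partial sums of the halves `(y 0, y 1)` and
`(y 2, y 3)` into `Q`, or a partial sum `P 3 - P 2`, `f - P 2` of the second half into `M`. -/
def forbiddenHalves (f : G) (B Q M : Finset G) (l : ℕ) (P : ℕ → G) : Finset G :=
  B ∪ if l = 2 then Q.image (P 1 + f - ·) ∪ M.image (f - ·)
    else if l = 3 then Q ∪ Q.image (· + P 2 - P 1) ∪ M.image (P 2 + ·) else ∅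

lemma forbiddenHalves_congr {f : G} {B Q M : Finset G} {l : ℕ} {P P' : ℕ → G}
    (h : ∀ j < l, P j = P' j) : forbiddenHalves f B Q M l P = forbiddenHalves f B Q M l P' := by
  unfold forbiddenHalves
  split_ifs with h2 h3
  · rw [h 1 (by omega)]
  · rw [h 1 (by omega), h 2 (by omega)]
  · rfl

lemma card_forbiddenHalves_le (f : G) (B Q M : Finset G) (l : ℕ) (P : ℕ → G) :
    #(forbiddenHalves f B Q M l P) ≤ #B + 2 * #Q + #M := by
  unfold forbiddenHalves
  split_ifs
  · grw [card_union_le, card_union_le, card_image_le, card_image_le]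
    omega
  · grw [card_union_le, card_union_le, card_union_le, card_image_le, card_image_le]
    omega
  · simp only [union_empty]
    omega

lemma halves_notMem_of_notMem_forbiddenHalves {f : G} {B Q M : Finset G} {y : Fin 4 → G}
    (hsum : ∑ j, y j = f) (hfQ : f ∉ Q)
    (hy : ∀ l, 0 < l → l < 4 → partialSum y l ∉ forbiddenHalves f B Q M l (partialSum y)) :
    (∀ j j', 1 ≤ j → j ≤ 2 → 1 ≤ j' → j' ≤ 2 →
      partialSum (fun i : Fin 2 => y (Fin.castAdd 2 i)) j +
        partialSum (fun i : Fin 2 => y (Fin.natAdd 2 i)) j' ∉ Q) ∧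
    ∀ j', 1 ≤ j' → j' ≤ 2 → partialSum (fun i : Fin 2 => y (Fin.natAdd 2 i)) j' ∉ M := by
  have hP4 : partialSum y (2 + 2) = f := (partialSum_of_le y le_rfl).trans hsum
  have h2 := hy 2 (by norm_num) (by norm_num)
  have h3 := hy 3 (by norm_num) (by norm_num)
  simp only [forbiddenHalves, Nat.reduceEqDiff, ↓reduceIte, mem_union, mem_image, not_or,
    not_exists, not_and] at h2 h3
  obtain ⟨-, hQ2, hM2⟩ := h2
  obtain ⟨-, ⟨hQ3, hQ3'⟩, hM3⟩ := h3
  refine ⟨fun j j' h₁ h₂ h₃ h₄ hmem => ?_, fun j' h₃ h₄ hmem => ?_⟩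
  · rw [partialSum_castAdd (a := 2) (b := 2) y h₂,
      partialSum_natAdd (a := 2) (b := 2) y h₄] at hmem
    interval_cases j <;> interval_cases j'
    · exact hQ3' _ hmem (by abel)
    · exact hQ2 _ hmem (by rw [hP4]; abel)
    · exact hQ3 (by simpa using hmem)
    · exact hfQ (by simpa [hP4] using hmem)
  · rw [partialSum_natAdd (a := 2) (b := 2) y h₄] at hmem
    interval_cases j'
    · exact hM3 _ hmem (by abel)
    · exact hM2 _ hmem (by rw [hP4]; abel)

end Halves

section Families

variable {G : Type} [AddCommGroup G] [Fintype G] [DecidableEq G]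

theorem exists_rainbow_pathCandidate_disjoint {z : ℕ} (hz : 2 ≤ z) {s : G} (hs : s ≠ 0)
    {E : Finset G} {m : ℕ} (hfib : DoublingFiberBound E m) (hsE : s ∉ E)
    (T : Finset (Fin z → G)) (hcard : 2 + 3 * z + m + #E + 3 * #T * z < Fintype.card G) :
    ∃ y : Fin z → G, (∑ j, y j = s ∧ Function.Injective y ∧ IsPathCandidate y) ∧
      ∀ c ∈ T, (∀ a b, c a ≠ y b) ∧ NearDissociablePair c y := by
  let A := T.biUnion fun c => univ.image c
  let B := T.biUnion fun c => (Ioo 0 z).image (partialSum c)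
  have hA : #A ≤ #T * z := card_biUnion_le_card_mul _ _ z fun c _ => card_image_le.trans (by simp)
  have hB : #B ≤ #T * z := card_biUnion_le_card_mul _ _ z fun c _ => card_image_le.trans (by simp)
  obtain ⟨y, hsum, hinj, hpath, hyA, hyB⟩ := exists_rainbow_pathCandidate hz hs hfib hsE A
    (fun _ _ => B) #B (fun _ _ _ _ => rfl) (fun _ _ => le_rfl) (by linarith)
  refine ⟨y, ⟨hsum, hinj, hpath⟩, fun c hc => ⟨fun a b h => hyA b ?_,
    fun j j' h₁ h₂ h₃ h₄ h => hyB j' h₃ (by omega) ?_⟩⟩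
  · exact mem_biUnion.mpr ⟨c, hc, h ▸ mem_image_of_mem _ (mem_univ a)⟩
  · exact mem_biUnion.mpr ⟨c, hc, h ▸ mem_image_of_mem _ (mem_Ioo.mpr ⟨by omega, by omega⟩)⟩

theorem exists_rainbow_nearDissociable_family {z : ℕ} (hz : 2 ≤ z) {s : G} (hs : s ≠ 0)
    {E : Finset G} {m : ℕ} (hfib : DoublingFiberBound E m) (hsE : s ∉ E) (t : ℕ)
    (hcard : 2 + 3 * z + m + #E + 3 * t * z < Fintype.card G) :
    ∃ S : Fin t → Fin z → G, (∀ i i', i ≠ i' → ∀ a b, S i a ≠ S i' b) ∧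
      (∀ i, ∑ j, S i j = s) ∧ (∀ i, Function.Injective (S i) ∧ IsPathCandidate (S i)) ∧
      ∀ i i', i ≠ i' → NearDissociablePair (S i) (S i') := by
  obtain ⟨S, hp, hr⟩ := exists_pairwise_of_forall_exists _
    (fun c d => (∀ a b, c a ≠ d b) ∧ NearDissociablePair c d)
    (fun c d h => ⟨fun a b => (h.1 b a).symm, h.2.symm⟩) t fun T hT =>
      exists_rainbow_pathCandidate_disjoint hz hs hfib hsE T (hcard.trans_le' (by gcongr))
  exact ⟨S, fun i i' h => (hr i i' h).1, fun i => (hp i).1, fun i => (hp i).2,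
    fun i i' h => (hr i i' h).2⟩

theorem exists_separableHalves_disjoint {f : G} (hf : f ≠ 0) {E : Finset G} {m : ℕ}
    (hfib : DoublingFiberBound E m) (hfE : f ∉ E) (D : Finset G) (hfD : ∀ d ∈ D, f ≠ d ∧ f ≠ -d)
    (T : Finset (Fin 4 → G)) (hcard : 14 + m + #E + 4 * #D + 14 * #T < Fintype.card G) :
    ∃ y : Fin 4 → G, (∑ j, y j = f ∧ Function.Injective y ∧ IsPathCandidate y ∧
      ∀ d ∈ D, SeparableAtDist (fun j : Fin 2 => y (Fin.castAdd 2 j))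
        (fun j : Fin 2 => y (Fin.natAdd 2 j)) d) ∧
      ∀ c ∈ T, (∀ a b, c a ≠ y b) ∧ NearDissociablePair c y ∧
        DissociablePair (fun j : Fin 2 => c (Fin.natAdd 2 j))
          (fun j : Fin 2 => y (Fin.natAdd 2 j)) := by
  let A := T.biUnion fun c => univ.image c
  let B := T.biUnion fun c => (Ioo 0 4).image (partialSum c)
  let M := T.biUnion fun c => (Icc 1 2).image (partialSum fun j : Fin 2 => c (Fin.natAdd 2 j))
  let Q := D ∪ D.image (-·)
  have hA : #A ≤ #T * 4 := card_biUnion_le_card_mul _ _ 4 fun c _ => card_image_le.trans (by simp)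
  have hB : #B ≤ #T * 4 := card_biUnion_le_card_mul _ _ 4 fun c _ => card_image_le.trans (by simp)
  have hM : #M ≤ #T * 2 := card_biUnion_le_card_mul _ _ 2 fun c _ => card_image_le.trans (by simp)
  have hQ : #Q ≤ 2 * #D := (card_union_le _ _).trans (by grw [card_image_le]; omega)
  have hfQ : f ∉ Q := by
    simp only [Q, mem_union, mem_image, not_or, not_exists, not_and]
    exact ⟨fun hf => (hfD f hf).1 rfl, fun d hd h => (hfD d hd).2 h.symm⟩
  obtain ⟨y, hsum, hinj, hpath, hyA, hy⟩ := exists_rainbow_pathCandidate (z := 4) (by norm_num)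
    hf hfib hfE A (forbiddenHalves f B Q M) _ (fun _ _ _ => forbiddenHalves_congr)
    (card_forbiddenHalves_le f B Q M) (by linarith)
  obtain ⟨hyQ, hyM⟩ := halves_notMem_of_notMem_forbiddenHalves hsum hfQ hy
  refine ⟨y, ⟨hsum, hinj, hpath, fun d hd j j' h₁ h₂ h₃ h₄ => ⟨fun h => ?_, fun h => ?_⟩⟩,
    fun c hc => ⟨fun a b h => ?_, fun j j' h₁ h₂ h₃ h₄ h => ?_, fun j j' h₁ h₂ h₃ h₄ h => ?_⟩⟩
  · exact hyQ j j' h₁ h₂ h₃ h₄ (h ▸ mem_union_left _ hd)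
  · exact hyQ j j' h₁ h₂ h₃ h₄ (h ▸ mem_union_right _ (mem_image_of_mem _ hd))
  · exact hyA b (mem_biUnion.mpr ⟨c, hc, h ▸ mem_image_of_mem _ (mem_univ a)⟩)
  · refine hy j' h₃ (by omega) (mem_union_left _ (mem_biUnion.mpr ⟨c, hc, ?_⟩))
    exact mem_image.mpr ⟨j, mem_Ioo.mpr ⟨h₁, by omega⟩, h⟩
  · exact hyM j' h₃ h₄ (mem_biUnion.mpr ⟨c, hc, mem_image.mpr ⟨j, mem_Icc.mpr ⟨h₁, h₂⟩, h⟩⟩)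

theorem exists_separableHalves_family {f : G} (hf : f ≠ 0) {E : Finset G} {m : ℕ}
    (hfib : DoublingFiberBound E m) (hfE : f ∉ E) (D : Finset G) (hfD : ∀ d ∈ D, f ≠ d ∧ f ≠ -d)
    (t : ℕ) (hcard : 14 + m + #E + 4 * #D + 14 * t < Fintype.card G) :
    ∃ F : Fin t → Fin 4 → G, (∀ i i', i ≠ i' → ∀ a b, F i a ≠ F i' b) ∧ (∀ i, ∑ j, F i j = f) ∧
      (∀ i, Function.Injective (F i) ∧ IsPathCandidate (F i)) ∧
      (∀ i i', i ≠ i' → NearDissociablePair (F i) (F i')) ∧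
      (∀ i i', i ≠ i' → DissociablePair (fun j : Fin 2 => F i (Fin.natAdd 2 j))
        (fun j : Fin 2 => F i' (Fin.natAdd 2 j))) ∧
      ∀ i, ∀ d ∈ D, SeparableAtDist (fun j : Fin 2 => F i (Fin.castAdd 2 j))
        (fun j : Fin 2 => F i (Fin.natAdd 2 j)) d := by
  obtain ⟨F, hp, hr⟩ := exists_pairwise_of_forall_exists _
    (fun c d : Fin 4 → G => (∀ a b, c a ≠ d b) ∧ NearDissociablePair c d ∧
      DissociablePair (fun j : Fin 2 => c (Fin.natAdd 2 j)) (fun j : Fin 2 => d (Fin.natAdd 2 j)))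
    (fun c d h => ⟨fun a b => (h.1 b a).symm, h.2.1.symm, h.2.2.symm⟩) t fun T hT =>
      exists_separableHalves_disjoint hf hfib hfE D hfD T (hcard.trans_le' (by gcongr))
  exact ⟨F, fun i i' h => (hr i i' h).1, fun i => (hp i).1, fun i => ⟨(hp i).2.1, (hp i).2.2.1⟩,
    fun i i' h => (hr i i' h).2.1, fun i i' h => (hr i i' h).2.2, fun i => (hp i).2.2.2⟩

/-- Each inequality of the conclusion says that `s` differs from a multiple `j • f` with
`-M - 1 ≤ j ≤ k - M + 1`. -/
theorem exists_avoiding_multiples (f : G) (E : Finset G) {M k : ℕ} (hM : M ≤ k)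
    (hcard : #E + (k + 3) < Fintype.card G) :
    ∃ s ∉ E, s ≠ 0 ∧ -(M • f) - s ≠ 0 ∧
      ∀ m ≤ k, f ≠ -(M • f) - s + m • f ∧ f ≠ -(-(M • f) - s + m • f) := by
  obtain ⟨s, -, hs⟩ := exists_mem_notMem_of_card_lt_card
    (s := E ∪ (Icc (-(M : ℤ) - 1) (k - M + 1)).image (· • f)) (t := univ)
    (by grw [card_union_le, card_image_le]; simp; omega)
  simp only [mem_union, mem_image, mem_Icc, not_or, not_exists, not_and] at hs
  obtain ⟨hsE, hs⟩ := hs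
  refine ⟨s, hsE, fun h => hs 0 (by omega) (by simp [h]), fun h => hs (-M) (by omega) ?_,
    fun m hm => ⟨fun h => hs (m - M - 1) (by omega) ?_, fun h => hs (m - M + 1) (by omega) ?_⟩⟩
  · linear_combination (norm := module) h
  · linear_combination (norm := module) -h
  · linear_combination (norm := module) h

end Families

lemma sq_le_of_le_rpow {k n : ℕ} (hn : 1 ≤ n) (h : (k : ℝ) ≤ (n : ℝ) ^ (0.001 : ℝ)) :
    k ^ 2 ≤ n := by
  have h2 : (k : ℝ) ^ 2 ≤ n := calc
    (k : ℝ) ^ 2 ≤ ((n : ℝ) ^ (0.001 : ℝ)) ^ 2 := pow_le_pow_left₀ (by positivity) h 2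
    _ = (n : ℝ) ^ (0.002 : ℝ) := by
      rw [← Real.rpow_natCast, ← Real.rpow_mul (by positivity)]
      norm_num
    _ ≤ (n : ℝ) ^ (1 : ℝ) := Real.rpow_le_rpow_of_exponent_le (by exact_mod_cast hn) (by norm_num)
    _ = n := Real.rpow_one _
  exact_mod_cast h2

/-- Existence of the special families `𝓕_G` and `𝓢_G` of tuples used in the cover-down
step for large `k`. -/
theorem special_families_exist :
    ∃ C : ℕ, 0 < C ∧
    ∀ (G : Type) [AddCommGroup G] [Fintype G] [DecidableEq G], ∀ k : ℕ,
      10 ^ 100 ≤ Fintype.card G →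
      10 ≤ k → (k : ℝ) ≤ (Fintype.card G : ℝ) ^ (0.001 : ℝ) →
      ∃ (f s : G) (z : ℕ), 2 ≤ z ∧ z ≤ 5 ∧
      ∃ (F : Fin (Fintype.card G / (k * C)) → Fin 4 → G)
        (Sq : Fin (Fintype.card G / (k * C)) → Fin z → G)
        (Fp Fm : Fin (Fintype.card G / (k * C)) → Fin 2 → G),
        -- (1) the tuples of each family are pairwise disjoint
        (∀ i i', i ≠ i' → ∀ a b, F i a ≠ F i' b) ∧
        (∀ i i', i ≠ i' → ∀ a b, Sq i a ≠ Sq i' b) ∧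
        -- (2) each F i is a 4-tuple with sum f
        (∀ i, (∑ j, F i j) = f) ∧
        -- (3) each Sq i is a z-tuple with sum s, a rainbow path-candidate, and the
        -- family is near-dissociable
        (∀ i, (∑ j, Sq i j) = s) ∧
        (∀ i, Function.Injective (Sq i) ∧ IsPathCandidate (Sq i)) ∧
        (∀ i i', i ≠ i' → NearDissociablePair (Sq i) (Sq i')) ∧
        -- (4) divisibility and q ≠ 0
        (4 ∣ (k - 4 - z)) ∧
        ((-(((k - 4 - z) / 4) • f) - s) ≠ 0) ∧
        -- (5) each F i is the concatenation of the 2-tuples Fp i and Fm i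
        (∀ i, F i 0 = Fp i 0 ∧ F i 1 = Fp i 1 ∧ F i 2 = Fm i 0 ∧ F i 3 = Fm i 1) ∧
        (∀ i, Function.Injective (Fp i) ∧ IsPathCandidate (Fp i)) ∧
        (∀ i, Function.Injective (Fm i) ∧ IsPathCandidate (Fm i)) ∧
        (∀ i i', i ≠ i' → DissociablePair (Fp i) (Fp i')) ∧
        (∀ i i', i ≠ i' → DissociablePair (Fm i) (Fm i')) ∧
        (∀ i, Function.Injective (F i) ∧ IsPathCandidate (F i)) ∧
        (∀ i i', i ≠ i' → NearDissociablePair (F i) (F i')) ∧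
        -- (6) separability at the distances q + m • f
        (∀ m : ℕ, m ≤ k → ∀ i,
          SeparableAtDist (Fp i) (Fm i)
            ((-(((k - 4 - z) / 4) • f) - s) + m • f)) := by
  refine ⟨100, by norm_num, fun G _ _ _ k hn hk hkn => ?_⟩
  obtain ⟨E, hE, hfib⟩ := exists_doublingFiberBound_sqrt (G := G)
  set n := Fintype.card G
  set t := n / (k * 100)
  have hsqrt : 100 * Nat.sqrt n ≤ n :=
    (Nat.mul_le_mul_right _ (Nat.le_sqrt.mpr (by omega))).trans (Nat.sqrt_le n)
  have hkn : 10 * k ≤ n := by nlinarith [sq_le_of_le_rpow (by omega) hkn]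
  have ht : 1000 * t ≤ n := (Nat.mul_le_mul_right t (by omega : 1000 ≤ k * 100)).trans
    ((mul_comm _ _).trans_le (Nat.div_mul_le_self n _))
  obtain ⟨f, -, hf⟩ := exists_mem_notMem_of_card_lt_card (s := insert 0 E) (t := univ)
    (by grw [card_insert_le]; simp; omega)
  obtain ⟨hf0, hfE⟩ := not_or.mp (mem_insert.not.mp hf)
  set z := (k - 2) % 4 + 2
  obtain ⟨s, hsE, hs0, hq0, hfD⟩ := exists_avoiding_multiples f E (M := (k - 4 - z) / 4) (k := k)
    (by omega) (by omega)
  obtain ⟨Sq, hS₁, hS₂, hS₃, hS₄⟩ := exists_rainbow_nearDissociable_family (z := z) (by omega)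
    hs0 hfib hsE t (by nlinarith [show z ≤ 5 by omega])
  obtain ⟨F, hF₁, hF₂, hF₃, hF₄, hF₅, hF₆⟩ := exists_separableHalves_family hf0 hfib hfE
    ((range (k + 1)).image fun m => -(((k - 4 - z) / 4) • f) - s + m • f)
    (by simpa [Nat.lt_succ_iff] using hfD) t (by grw [card_image_le]; simp; omega)
  refine ⟨f, s, z, by omega, by omega, F, Sq, fun i j => F i (Fin.castAdd 2 j),
    fun i j => F i (Fin.natAdd 2 j), hF₁, hS₁, hF₂, hS₂, hS₃, hS₄, by omega, hq0,
    fun i => ⟨rfl, rfl, rfl, rfl⟩,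
    fun i => ⟨(hF₃ i).1.comp (Fin.castAdd_injective 2 2), (hF₃ i).2.castAdd⟩,
    fun i => ⟨(hF₃ i).1.comp (Fin.natAdd_injective 2 2), (hF₃ i).2.natAdd⟩,
    fun i i' h => (hF₄ i i' h).dissociablePair_castAdd two_pos two_pos, hF₅, hF₃, hF₄,
    fun m hm i => hF₆ i _ (mem_image_of_mem _ (mem_range.mpr (by omega)))⟩
end

section
/- Let G be a finite abelian group of order n and let a : {1,…,k} → G be any function (a multiset of k elements of G). Then the number of g ∈ G such that more than n^{3/5} indices i ∈ {1,…,k} have a(i) + g non-generic is at most k·n^{−1/10}; likewise, the number of g ∈ G such that more than n^{3/5} indices i have a(i) − g non-generic is at most k·n^{−1/10}. -/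
open scoped Classical
open Finset

def Generic {G : Type} [AddCommGroup G] [Fintype G] [DecidableEq G] (g : G) : Prop :=
  g ≠ 0 ∧ ((Finset.univ.filter (fun x : G => x + x = g)).card : ℝ)
      ≤ (Fintype.card G : ℝ) ^ ((1 : ℝ) / 2)

-- fiber count: if x0+x0 = g then count g = count 0
lemma fiber_card {G : Type} [AddCommGroup G] [Fintype G] [DecidableEq G]
    {g : G} {x0 : G} (hx0 : x0 + x0 = g) :
    (univ.filter (fun x : G => x + x = g)).card
      = (univ.filter (fun x : G => x + x = 0)).card := by
  apply Finset.card_bij (fun y _ => y - x0)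
  · intro y hy
    simp only [mem_filter, mem_univ, true_and] at hy ⊢
    have : y - x0 + (y - x0) = (y + y) - (x0 + x0) := by abel
    rw [this, hy, hx0, sub_self]
  · intro y1 h1 y2 h2 h
    simpa using sub_left_injective h
  · intro z hz
    simp only [mem_filter, mem_univ, true_and] at hz
    refine ⟨z + x0, ?_, by abel⟩
    simp only [mem_filter, mem_univ, true_and]
    have : z + x0 + (z + x0) = (z + z) + (x0 + x0) := by abel
    rw [this, hz, hx0, zero_add]

lemma nongeneric_card_le (G : Type) [AddCommGroup G] [Fintype G] [DecidableEq G] :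
    ((univ.filter (fun g : G => ¬ Generic g)).card : ℝ)
      ≤ (Fintype.card G : ℝ) ^ ((1 : ℝ) / 2) := by
  set n : ℕ := Fintype.card G with hn
  have hn1 : (1 : ℝ) ≤ (n : ℝ) := by exact_mod_cast Fintype.card_pos
  have hn0 : (0 : ℝ) < (n : ℝ) := by linarith
  have hroot1 : (1 : ℝ) ≤ (n : ℝ) ^ ((1:ℝ)/2) := Real.one_le_rpow hn1 (by norm_num)
  set t : ℕ := (univ.filter (fun x : G => x + x = 0)).card with ht
  by_cases hcase : (t : ℝ) ≤ (n : ℝ) ^ ((1:ℝ)/2)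
  · -- every nonzero element is generic
    have hsub : (univ.filter (fun g : G => ¬ Generic g)) ⊆ {0} := by
      intro g hg
      simp only [mem_filter, mem_univ, true_and, Generic, not_and_or, not_le, not_ne_iff] at hg
      rcases hg with hg | hg
      · simpa using hg
      · exfalso
        rcases Finset.eq_empty_or_nonempty (univ.filter (fun x : G => x + x = g)) with he | ⟨x0, hx0⟩
        · rw [he] at hg; simp at hg; linarith
        · simp only [mem_filter, mem_univ, true_and] at hx0
          rw [fiber_card hx0] at hg
          exact absurd hcase (not_le.mpr hg)
    calc ((univ.filter (fun g : G => ¬ Generic g)).card : ℝ)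
        ≤ (({0} : Finset G).card : ℝ) := by exact_mod_cast Finset.card_le_card hsub
      _ = 1 := by simp
      _ ≤ _ := hroot1
  · push_neg at hcase
    -- nongeneric set ⊆ image of doubling map
    set R := univ.image (fun x : G => x + x) with hR
    have hsub : (univ.filter (fun g : G => ¬ Generic g)) ⊆ R := by
      intro g hg
      simp only [mem_filter, mem_univ, true_and, Generic, not_and_or, not_le, not_ne_iff] at hg
      rcases hg with hg | hg
      · exact mem_image.mpr ⟨0, mem_univ 0, by rw [hg, add_zero]⟩
      · have : (0:ℝ) < ((univ.filter (fun x : G => x + x = g)).card : ℝ) := lt_of_le_of_lt (by positivity) hg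
        have : (univ.filter (fun x : G => x + x = g)).Nonempty := by
          rw [← Finset.card_pos]; exact_mod_cast this
        obtain ⟨x0, hx0⟩ := this
        simp only [mem_filter, mem_univ, true_and] at hx0
        exact mem_image.mpr ⟨x0, mem_univ x0, hx0⟩
    have hcount : n = R.card * t := by
      have := Finset.card_eq_sum_card_fiberwise (f := fun x : G => x + x) (s := univ) (t := R)
        (fun x _ => mem_image.mpr ⟨x, mem_univ x, rfl⟩)
      rw [Finset.card_univ] at this
      rw [hn, this, Finset.sum_congr rfl (fun g hg => ?_), Finset.sum_const, smul_eq_mul]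
      obtain ⟨x0, _, hx0⟩ := mem_image.mp hg
      exact fiber_card hx0
    have hroot_pos : (0:ℝ) < (n : ℝ) ^ ((1:ℝ)/2) := by positivity
    have hRle : (R.card : ℝ) * (n : ℝ) ^ ((1:ℝ)/2) ≤ (n : ℝ) := by
      calc (R.card : ℝ) * (n : ℝ) ^ ((1:ℝ)/2) ≤ (R.card : ℝ) * t := by
            apply mul_le_mul_of_nonneg_left (le_of_lt hcase) (by positivity)
        _ = (n : ℝ) := by exact_mod_cast hcount.symm
    have hnn : (n : ℝ) = (n : ℝ) ^ ((1:ℝ)/2) * (n : ℝ) ^ ((1:ℝ)/2) := by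
      rw [← Real.rpow_add hn0]; norm_num
    have : (R.card : ℝ) ≤ (n : ℝ) ^ ((1:ℝ)/2) := by
      have h2 : (R.card : ℝ) * (n : ℝ) ^ ((1:ℝ)/2) ≤ (n : ℝ) ^ ((1:ℝ)/2) * (n : ℝ) ^ ((1:ℝ)/2) :=
        le_of_le_of_eq (le_of_eq_of_le rfl hRle) hnn
      exact le_of_mul_le_mul_right h2 hroot_pos
    calc ((univ.filter (fun g : G => ¬ Generic g)).card : ℝ)
        ≤ (R.card : ℝ) := by exact_mod_cast Finset.card_le_card hsub
      _ ≤ _ := this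

lemma main_count (G : Type) [AddCommGroup G] [Fintype G] [DecidableEq G]
    (k : ℕ) (c : Fin k → G → G) (hc : ∀ i, Function.Bijective (c i)) :
    ((univ.filter (fun g : G =>
        (Fintype.card G : ℝ) ^ ((3 : ℝ) / 5) <
          ((univ.filter (fun i : Fin k => ¬ Generic (c i g))).card : ℝ))).card : ℝ)
      ≤ (k : ℝ) * (Fintype.card G : ℝ) ^ (-(1 : ℝ) / 10) := by
  set n : ℕ := Fintype.card G with hn
  have hn1 : (1 : ℝ) ≤ (n : ℝ) := by exact_mod_cast Fintype.card_pos
  have hn0 : (0 : ℝ) < (n : ℝ) := by linarith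
  set N := univ.filter (fun g : G => ¬ Generic g) with hN
  -- per-index count
  have hfix : ∀ i : Fin k, (univ.filter (fun g : G => ¬ Generic (c i g))).card = N.card := by
    intro i
    apply Finset.card_bij (fun g _ => c i g)
    · intro g hg
      simp only [hN, mem_filter, mem_univ, true_and] at hg ⊢
      exact hg
    · intro g1 _ g2 _ h
      exact (hc i).injective h
    · intro h hh
      simp only [hN, mem_filter, mem_univ, true_and] at hh
      obtain ⟨g, hg⟩ := (hc i).surjective h
      exact ⟨g, by simp [hg, hh], hg⟩
  -- double counting
  have hswap : ∑ g : G, (univ.filter (fun i : Fin k => ¬ Generic (c i g))).card = k * N.card := by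
    have : ∑ g : G, (univ.filter (fun i : Fin k => ¬ Generic (c i g))).card
        = ∑ i : Fin k, (univ.filter (fun g : G => ¬ Generic (c i g))).card := by
      simp only [Finset.card_filter]
      exact Finset.sum_comm
    rw [this, Finset.sum_congr rfl (fun i _ => hfix i), Finset.sum_const, smul_eq_mul,
      Finset.card_univ, Fintype.card_fin]
  set B := univ.filter (fun g : G =>
      (n : ℝ) ^ ((3 : ℝ) / 5) <
        ((univ.filter (fun i : Fin k => ¬ Generic (c i g))).card : ℝ)) with hB
  have hBle : (B.card : ℝ) * (n : ℝ) ^ ((3:ℝ)/5) ≤ (k : ℝ) * (N.card : ℝ) := by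
    calc (B.card : ℝ) * (n : ℝ) ^ ((3:ℝ)/5)
        = ∑ _g ∈ B, (n : ℝ) ^ ((3:ℝ)/5) := by rw [Finset.sum_const, nsmul_eq_mul]
      _ ≤ ∑ g ∈ B, ((univ.filter (fun i : Fin k => ¬ Generic (c i g))).card : ℝ) := by
          apply Finset.sum_le_sum
          intro g hg
          simp only [hB, mem_filter, mem_univ, true_and] at hg
          exact le_of_lt hg
      _ ≤ ∑ g : G, ((univ.filter (fun i : Fin k => ¬ Generic (c i g))).card : ℝ) := by
          apply Finset.sum_le_sum_of_subset_of_nonneg (Finset.subset_univ B)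
          intro g _ _; positivity
      _ = (k : ℝ) * (N.card : ℝ) := by exact_mod_cast hswap
  have hNle := nongeneric_card_le G
  rw [← hN, ← hn] at hNle
  have h35 : (0:ℝ) < (n : ℝ) ^ ((3:ℝ)/5) := by positivity
  have key : (n : ℝ) ^ ((1:ℝ)/2) = (n : ℝ) ^ (-(1:ℝ)/10) * (n : ℝ) ^ ((3:ℝ)/5) := by
    rw [← Real.rpow_add hn0]; norm_num
  have : (B.card : ℝ) * (n : ℝ) ^ ((3:ℝ)/5)
      ≤ ((k : ℝ) * (n : ℝ) ^ (-(1:ℝ)/10)) * (n : ℝ) ^ ((3:ℝ)/5) := by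
    calc (B.card : ℝ) * (n : ℝ) ^ ((3:ℝ)/5) ≤ (k : ℝ) * (N.card : ℝ) := hBle
      _ ≤ (k : ℝ) * ((n : ℝ) ^ ((1:ℝ)/2)) := by
          apply mul_le_mul_of_nonneg_left hNle (by positivity)
      _ = ((k : ℝ) * (n : ℝ) ^ (-(1:ℝ)/10)) * (n : ℝ) ^ ((3:ℝ)/5) := by
          rw [key]; ring
  exact le_of_mul_le_mul_right this h35

/-- For any multiset `a` of `k` elements of `G`, at most `k·n^(-1/10)` translates
`a + g` (resp. `a - g`) contain more than `n^(3/5)` non-generic elements. -/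
theorem nongeneric_translates
    (G : Type) [AddCommGroup G] [Fintype G] [DecidableEq G]
    (k : ℕ) (a : Fin k → G) :
    ((Finset.univ.filter (fun g : G =>
        (Fintype.card G : ℝ) ^ ((3 : ℝ) / 5) <
          ((Finset.univ.filter (fun i : Fin k => ¬ Generic (a i + g))).card : ℝ))).card : ℝ)
      ≤ (k : ℝ) * (Fintype.card G : ℝ) ^ (-(1 : ℝ) / 10) ∧
    ((Finset.univ.filter (fun g : G =>
        (Fintype.card G : ℝ) ^ ((3 : ℝ) / 5) <
          ((Finset.univ.filter (fun i : Fin k => ¬ Generic (a i - g))).card : ℝ))).card : ℝ)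
      ≤ (k : ℝ) * (Fintype.card G : ℝ) ^ (-(1 : ℝ) / 10) := by
  constructor
  · exact main_count G k (fun i g => a i + g)
      (fun i => (Equiv.addLeft (a i)).bijective)
  · exact main_count G k (fun i g => a i - g)
      (fun i => ⟨fun x y h => by simpa using sub_right_injective h,
        fun y => ⟨a i - y, sub_sub_cancel _ _⟩⟩)
end

section
/- There is N ∈ ℕ such that the following holds. Let G be a finite abelian group (written additively) of order n ≥ N, let p be a real with n^{−1/600} ≤ p ≤ 1, and let X be a p-random subset of G. Then with probability at least 1 − 8/n³ the following event holds: for every Y ⊆ G, there are at most 8·n^{9/10} elements g ∈ G failing the property that for every choice of signs ε₀, ε₁, ε₂ ∈ {+1, −1}, the number of pairs (x, y) ∈ X × Y with ε₀·g + ε₁·x + ε₂·y = 0 lies between p·|Y| − n^{9/10} and p·|Y| + n^{9/10}. -/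
/-!
Call `X` uniform if every character sum `∑_{g ∈ X} χ g - p ∑_g χ g` of the balanced function
`1_X - p` has norm at most `T = n^(17/20)`. Hoeffding's inequality for the real and imaginary
parts, with a union bound over the `n` characters, shows that `X` fails to be uniform with
probability at most `4n·exp(-T²/16n) = 4n·exp(-n^(7/10)/16)`, which is below `8/n³` for large `n`.

For uniform `X` and fixed signs, the number of pairs minus `p|Y|` is, as a function of `±g`, the
convolution of `1_X - p` with the indicator of `±Y`; by Parseval its squares sum to at most
`T²|Y| ≤ T²n`. Counting as in Chebyshev's inequality leaves at most `T²n/r² = n^(9/10)`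
exceptional `g` for each of the `8` sign patterns, where `r = n^(9/10)`.
-/

open scoped Classical

/-- The probability that a `p`-random subset of the finite type `G` (each element included
independently with probability `p`) equals the finset `A`. -/
noncomputable def setProb (G : Type) [Fintype G] [DecidableEq G] (p : ℝ) (A : Finset G) : ℝ :=
  p ^ A.card * (1 - p) ^ (Fintype.card G - A.card)

open Finset Real ComplexConjugate Filter Topology

noncomputable def randomSubsetProb (α : Type) [Fintype α] [DecidableEq α] (p : ℝ)
    (E : Finset α → Prop) [DecidablePred E] : ℝ :=
  ∑ X : Finset α, if E X then setProb α p X else 0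

section RandomSubset

variable {α : Type} [Fintype α] [DecidableEq α] {p : ℝ}

lemma setProb_nonneg (hp0 : 0 ≤ p) (hp1 : p ≤ 1) (A : Finset α) : 0 ≤ setProb α p A :=
  mul_nonneg (pow_nonneg hp0 _) (pow_nonneg (sub_nonneg.mpr hp1) _)

lemma sum_setProb_mul_prod (p : ℝ) (F : α → ℝ) :
    ∑ X : Finset α, setProb α p X * ∏ g ∈ X, F g = ∏ g, (p * F g + (1 - p)) := by
  rw [Fintype.prod_add]
  refine sum_congr rfl fun X _ => ?_
  rw [prod_mul_distrib, prod_const, prod_const, card_compl, setProb]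
  ring

lemma sum_setProb (p : ℝ) : ∑ X : Finset α, setProb α p X = 1 := by
  simpa using sum_setProb_mul_prod (α := α) p fun _ => 1

lemma randomSubsetProb_mono (hp0 : 0 ≤ p) (hp1 : p ≤ 1) {E F : Finset α → Prop}
    [DecidablePred E] [DecidablePred F] (h : ∀ X, E X → F X) :
    randomSubsetProb α p E ≤ randomSubsetProb α p F := by
  refine sum_le_sum fun X _ => ?_
  by_cases hE : E X
  · simp [hE, h X hE]
  · simp only [hE, if_false]
    split_ifs
    exacts [setProb_nonneg hp0 hp1 X, le_rfl]

lemma randomSubsetProb_not (E : Finset α → Prop) [DecidablePred E] :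
    randomSubsetProb α p (fun X => ¬ E X) = 1 - randomSubsetProb α p E := by
  rw [eq_sub_iff_add_eq, randomSubsetProb, randomSubsetProb, ← sum_add_distrib,
    ← sum_setProb (α := α) p]
  refine sum_congr rfl fun X _ => ?_
  by_cases hE : E X <;> simp [hE]

lemma randomSubsetProb_or_le (hp0 : 0 ≤ p) (hp1 : p ≤ 1) (E F : Finset α → Prop)
    [DecidablePred E] [DecidablePred F] :
    randomSubsetProb α p (fun X => E X ∨ F X)
      ≤ randomSubsetProb α p E + randomSubsetProb α p F := by
  rw [randomSubsetProb, randomSubsetProb, randomSubsetProb, ← sum_add_distrib]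
  refine sum_le_sum fun X _ => ?_
  have := setProb_nonneg hp0 hp1 X
  by_cases hE : E X <;> by_cases hF : F X <;> simp [hE, hF, this]

lemma randomSubsetProb_exists_le (hp0 : 0 ≤ p) (hp1 : p ≤ 1) {ι : Type*} [Fintype ι]
    (E : ι → Finset α → Prop) [∀ i, DecidablePred (E i)] :
    randomSubsetProb α p (fun X => ∃ i, E i X) ≤ ∑ i, randomSubsetProb α p (E i) := by
  simp only [randomSubsetProb]
  rw [sum_comm]
  refine sum_le_sum fun X _ => ?_
  have hterm : ∀ i, 0 ≤ if E i X then setProb α p X else 0 := fun i => by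
    split_ifs
    exacts [setProb_nonneg hp0 hp1 X, le_rfl]
  split_ifs with h
  · obtain ⟨i, hi⟩ := h
    simpa [hi] using single_le_sum (fun j _ => hterm j) (mem_univ i)
  · exact sum_nonneg fun i _ => hterm i

lemma exp_le_one_add_add_sq {x : ℝ} (hx : |x| ≤ 1) : exp x ≤ 1 + x + x ^ 2 := by
  linarith [(abs_le.mp (abs_exp_sub_one_sub_id_le hx)).2]

lemma bernoulli_mgf_le (hp0 : 0 ≤ p) (hp1 : p ≤ 1) {u : ℝ} (hu : |u| ≤ 1) :
    p * exp ((1 - p) * u) + (1 - p) * exp (-(p * u)) ≤ exp (u ^ 2) := by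
  have hq0 : 0 ≤ 1 - p := sub_nonneg.mpr hp1
  have h₁ : |(1 - p) * u| ≤ 1 := by
    rw [abs_mul, abs_of_nonneg hq0]; nlinarith [abs_nonneg u]
  have h₂ : |-(p * u)| ≤ 1 := by
    rw [abs_neg, abs_mul, abs_of_nonneg hp0]; nlinarith [abs_nonneg u]
  -- the linear terms cancel, leaving `1 + p (1 - p) u²`
  nlinarith [mul_le_mul_of_nonneg_left (exp_le_one_add_add_sq h₁) hp0,
    mul_le_mul_of_nonneg_left (exp_le_one_add_add_sq h₂) hq0, add_one_le_exp (u ^ 2),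
    mul_nonneg (mul_nonneg hp0 hq0) (sq_nonneg u)]

lemma sum_setProb_mul_exp_le (hp0 : 0 ≤ p) (hp1 : p ≤ 1) {a : α → ℝ} (ha : ∀ g, |a g| ≤ 1)
    {l : ℝ} (hl : |l| ≤ 1) :
    ∑ X : Finset α, setProb α p X * exp (l * (∑ g ∈ X, a g - p * ∑ g, a g))
      ≤ exp (Fintype.card α * l ^ 2) := by
  have hsplit : ∀ X : Finset α, exp (l * (∑ g ∈ X, a g - p * ∑ g, a g))
      = (∏ g ∈ X, exp (l * a g)) * ∏ g, exp (-(p * (l * a g))) := by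
    intro X
    rw [← exp_sum, ← exp_sum, ← exp_add]
    congr 1
    rw [sum_neg_distrib, ← mul_sum, ← mul_sum, ← mul_sum]
    ring
  have hfactor : ∀ g, (p * exp (l * a g) + (1 - p)) * exp (-(p * (l * a g))) ≤ exp (l ^ 2) := by
    intro g
    have hu : |l * a g| ≤ 1 := by
      rw [abs_mul]; exact mul_le_one₀ hl (abs_nonneg _) (ha g)
    calc (p * exp (l * a g) + (1 - p)) * exp (-(p * (l * a g)))
        = p * exp ((1 - p) * (l * a g)) + (1 - p) * exp (-(p * (l * a g))) := by
          rw [add_mul, mul_assoc, ← exp_add]; ring_nf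
      _ ≤ exp ((l * a g) ^ 2) := bernoulli_mgf_le hp0 hp1 hu
      _ ≤ exp (l ^ 2) := by
          rw [exp_le_exp, mul_pow, ← sq_abs (a g)]
          exact mul_le_of_le_one_right (sq_nonneg l) (pow_le_one₀ (abs_nonneg _) (ha g))
  calc ∑ X : Finset α, setProb α p X * exp (l * (∑ g ∈ X, a g - p * ∑ g, a g))
      = (∑ X : Finset α, setProb α p X * ∏ g ∈ X, exp (l * a g))
          * ∏ g, exp (-(p * (l * a g))) := by
        simp only [hsplit, sum_mul, mul_assoc]
    _ = ∏ g, (p * exp (l * a g) + (1 - p)) * exp (-(p * (l * a g))) := by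
        rw [sum_setProb_mul_prod, prod_mul_distrib]
    _ ≤ ∏ _g : α, exp (l ^ 2) :=
        prod_le_prod (fun g _ => by positivity) fun g _ => hfactor g
    _ = exp (Fintype.card α * l ^ 2) := by
        rw [prod_const, ← exp_nat_mul, card_univ]

lemma randomSubsetProb_ge_le_exp (hp0 : 0 ≤ p) (hp1 : p ≤ 1) {a : α → ℝ}
    (ha : ∀ g, |a g| ≤ 1) {l : ℝ} (hl : |l| ≤ 1) (s : ℝ) :
    randomSubsetProb α p (fun X => s ≤ l * (∑ g ∈ X, a g - p * ∑ g, a g))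
      ≤ exp (Fintype.card α * l ^ 2 - s) := by
  -- exponential Markov inequality
  calc randomSubsetProb α p (fun X => s ≤ l * (∑ g ∈ X, a g - p * ∑ g, a g))
      ≤ ∑ X : Finset α, setProb α p X * exp (l * (∑ g ∈ X, a g - p * ∑ g, a g)) * exp (-s) := by
        refine sum_le_sum fun X _ => ?_
        have hX := setProb_nonneg hp0 hp1 X
        split_ifs with h
        · rw [mul_assoc, ← exp_add]
          exact le_mul_of_one_le_right hX (one_le_exp (by linarith))
        · positivity
    _ ≤ exp (Fintype.card α * l ^ 2) * exp (-s) := by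
        rw [← sum_mul]
        exact mul_le_mul_of_nonneg_right (sum_setProb_mul_exp_le hp0 hp1 ha hl) (exp_pos _).le
    _ = exp (Fintype.card α * l ^ 2 - s) := by rw [← exp_add, sub_eq_add_neg]

lemma randomSubsetProb_lt_abs_le (hp0 : 0 ≤ p) (hp1 : p ≤ 1) {a : α → ℝ}
    (ha : ∀ g, |a g| ≤ 1) {t : ℝ} (ht0 : 0 ≤ t) (ht : t ≤ 2 * Fintype.card α) :
    randomSubsetProb α p (fun X => t < |∑ g ∈ X, a g - p * ∑ g, a g|)
      ≤ 2 * exp (-(t ^ 2 / (4 * Fintype.card α))) := by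
  set n : ℝ := (Fintype.card α : ℝ)
  -- the optimal parameter of the exponential Markov inequality
  set l := t / (2 * n)
  have hl0 : 0 ≤ l := by positivity
  have hl : |l| ≤ 1 := by
    rw [abs_of_nonneg hl0]; exact div_le_one_of_le₀ ht (by positivity)
  have hexp : n * l ^ 2 - l * t = -(t ^ 2 / (4 * n)) := by
    rcases eq_or_ne n 0 with hn | hn
    · simp [l, hn]
    · simp only [l]; field_simp; ring
  calc randomSubsetProb α p (fun X => t < |∑ g ∈ X, a g - p * ∑ g, a g|)
      ≤ randomSubsetProb α p (fun X => l * t ≤ l * (∑ g ∈ X, a g - p * ∑ g, a g) ∨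
          l * t ≤ -l * (∑ g ∈ X, a g - p * ∑ g, a g)) := by
        refine randomSubsetProb_mono hp0 hp1 fun X hX => ?_
        rcases lt_abs.mp hX with h | h
        · exact Or.inl (mul_le_mul_of_nonneg_left h.le hl0)
        · exact Or.inr (by rw [neg_mul, ← mul_neg]; exact mul_le_mul_of_nonneg_left h.le hl0)
    _ ≤ exp (n * l ^ 2 - l * t) + exp (n * (-l) ^ 2 - l * t) :=
        (randomSubsetProb_or_le hp0 hp1 _ _).trans (add_le_add
          (randomSubsetProb_ge_le_exp hp0 hp1 ha hl _)
          (randomSubsetProb_ge_le_exp hp0 hp1 ha (by rwa [abs_neg]) _))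
    _ = 2 * exp (-(t ^ 2 / (4 * n))) := by rw [neg_sq, hexp]; ring

lemma randomSubsetProb_lt_norm_le (hp0 : 0 ≤ p) (hp1 : p ≤ 1) {a : α → ℂ}
    (ha : ∀ g, ‖a g‖ ≤ 1) {T : ℝ} (hT0 : 0 ≤ T) (hT : T ≤ 4 * Fintype.card α) :
    randomSubsetProb α p (fun X => T < ‖∑ g ∈ X, a g - p * ∑ g, a g‖)
      ≤ 4 * exp (-(T ^ 2 / (16 * Fintype.card α))) := by
  have hre : ∀ X : Finset α, (∑ g ∈ X, a g - p * ∑ g, a g).re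
      = ∑ g ∈ X, (a g).re - p * ∑ g, (a g).re := by
    intro X; simp [Complex.re_sum]
  have him : ∀ X : Finset α, (∑ g ∈ X, a g - p * ∑ g, a g).im
      = ∑ g ∈ X, (a g).im - p * ∑ g, (a g).im := by
    intro X; simp [Complex.im_sum]
  have hhalf := fun (b : α → ℝ) (hb : ∀ g, |b g| ≤ 1) =>
    randomSubsetProb_lt_abs_le hp0 hp1 hb (t := T / 2) (by positivity) (by linarith)
  calc randomSubsetProb α p (fun X => T < ‖∑ g ∈ X, a g - p * ∑ g, a g‖)
      ≤ randomSubsetProb α p (fun X => T / 2 < |∑ g ∈ X, (a g).re - p * ∑ g, (a g).re| ∨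
          T / 2 < |∑ g ∈ X, (a g).im - p * ∑ g, (a g).im|) := by
        refine randomSubsetProb_mono hp0 hp1 fun X hX => ?_
        have := Complex.norm_le_abs_re_add_abs_im (∑ g ∈ X, a g - p * ∑ g, a g)
        rw [hre, him] at this
        by_contra! h
        linarith [h.1, h.2]
    _ ≤ 2 * exp (-((T / 2) ^ 2 / (4 * Fintype.card α)))
          + 2 * exp (-((T / 2) ^ 2 / (4 * Fintype.card α))) :=
        (randomSubsetProb_or_le hp0 hp1 _ _).trans (add_le_add
          (hhalf _ fun g => (Complex.abs_re_le_norm _).trans (ha g))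
          (hhalf _ fun g => (Complex.abs_im_le_norm _).trans (ha g)))
    _ = 4 * exp (-(T ^ 2 / (16 * Fintype.card α))) := by ring_nf

end RandomSubset

lemma card_lt_abs_le_sum_sq_div {ι : Type*} [Fintype ι] (F : ι → ℝ) {r : ℝ} (hr : 0 < r) :
    (#{i | r < |F i|} : ℝ) ≤ (∑ i, F i ^ 2) / r ^ 2 := by
  rw [le_div_iff₀ (by positivity), ← nsmul_eq_mul]
  calc #{i | r < |F i|} • r ^ 2 ≤ ∑ i ∈ {i | r < |F i|}, F i ^ 2 := by
        refine card_nsmul_le_sum _ _ _ fun i hi => ?_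
        simpa only [sq_abs] using pow_le_pow_left₀ hr.le (mem_filter.mp hi).2.le 2
    _ ≤ ∑ i, F i ^ 2 := sum_le_univ_sum_of_nonneg fun i => sq_nonneg _

section AddCharSums

variable {G : Type} [AddCommGroup G] [Fintype G]

lemma sum_norm_sum_mul_addChar_sq (f : G → ℂ) :
    ∑ χ : AddChar G ℂ, ‖∑ g, f g * χ g‖ ^ 2 = Fintype.card G * ∑ g, ‖f g‖ ^ 2 := by
  suffices h : ∑ χ : AddChar G ℂ, (∑ g, f g * χ g) * conj (∑ g, f g * χ g)
      = Fintype.card G * ∑ g, f g * conj (f g) by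
    simp only [Complex.mul_conj'] at h
    exact_mod_cast h
  have hexpand : ∀ χ : AddChar G ℂ, (∑ g, f g * χ g) * conj (∑ g, f g * χ g)
      = ∑ g, ∑ h, f g * conj (f h) * χ (g - h) := by
    intro χ
    rw [map_sum, sum_mul_sum]
    refine sum_congr rfl fun g _ => sum_congr rfl fun h _ => ?_
    rw [map_mul, sub_eq_add_neg, AddChar.map_add_eq_mul, AddChar.map_neg_eq_conj]
    ring
  calc ∑ χ : AddChar G ℂ, (∑ g, f g * χ g) * conj (∑ g, f g * χ g)
      = ∑ g, ∑ h, f g * conj (f h) * ∑ χ : AddChar G ℂ, χ (g - h) := by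
        simp only [hexpand, mul_sum]
        rw [sum_comm]
        exact sum_congr rfl fun g _ => sum_comm
    _ = Fintype.card G * ∑ g, f g * conj (f g) := by
        simp [AddChar.sum_apply_eq_ite, sub_eq_zero, mul_sum, mul_comm]

lemma sum_norm_sum_addChar_sq (S : Finset G) :
    ∑ χ : AddChar G ℂ, ‖∑ s ∈ S, χ s‖ ^ 2 = Fintype.card G * S.card := by
  have h := sum_norm_sum_mul_addChar_sq (G := G) fun g => if g ∈ S then 1 else 0
  simp only [ite_mul, one_mul, zero_mul, sum_ite_mem, univ_inter] at h
  rw [h]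
  simp [apply_ite (fun z : ℂ => ‖z‖ ^ 2)]

lemma sum_sum_translate_mul_addChar (ν : G → ℂ) (S : Finset G) (χ : AddChar G ℂ) :
    ∑ c, (∑ s ∈ S, ν (c + s)) * χ c = (∑ u, ν u * χ u) * conj (∑ s ∈ S, χ s) := by
  simp only [sum_mul, map_sum, mul_sum]
  rw [sum_comm]
  refine sum_congr rfl fun s _ => ?_
  refine Fintype.sum_equiv (Equiv.addRight s) _ _ fun c => ?_
  rw [Equiv.coe_addRight, ← AddChar.map_neg_eq_conj, mul_assoc, ← AddChar.map_add_eq_mul,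
    add_neg_cancel_right]

lemma sum_norm_sum_translate_sq_le {ν : G → ℂ} {T : ℝ}
    (hν : ∀ χ : AddChar G ℂ, ‖∑ g, ν g * χ g‖ ≤ T) (S : Finset G) :
    ∑ c, ‖∑ s ∈ S, ν (c + s)‖ ^ 2 ≤ T ^ 2 * S.card := by
  have hn : (0 : ℝ) < Fintype.card G := by exact_mod_cast Fintype.card_pos
  refine le_of_mul_le_mul_left ?_ hn
  calc (Fintype.card G : ℝ) * ∑ c, ‖∑ s ∈ S, ν (c + s)‖ ^ 2
      = ∑ χ : AddChar G ℂ, ‖∑ g, ν g * χ g‖ ^ 2 * ‖∑ s ∈ S, χ s‖ ^ 2 := by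
        rw [← sum_norm_sum_mul_addChar_sq]
        simp only [sum_sum_translate_mul_addChar, norm_mul, Complex.norm_conj, mul_pow]
    _ ≤ ∑ χ : AddChar G ℂ, T ^ 2 * ‖∑ s ∈ S, χ s‖ ^ 2 := by
        gcongr with χ
        exact hν χ
    _ = Fintype.card G * (T ^ 2 * S.card) := by
        rw [← mul_sum, sum_norm_sum_addChar_sq]; ring

end AddCharSums

section SignedCounts

variable {G : Type} [AddCommGroup G]

lemma units_int_smul_add_eq_zero_iff (u₀ u₁ u₂ : ℤˣ) (g x y : G) :
    (u₀ : ℤ) • g + (u₁ : ℤ) • x + (u₂ : ℤ) • y = 0 ↔ x = -(u₁⁻¹ * u₀) • g + -(u₁⁻¹ * u₂) • y := by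
  change u₀ • g + u₁ • x + u₂ • y = 0 ↔ _
  rw [add_right_comm, add_eq_zero_iff_neg_eq', neg_eq_iff_eq_neg, ← eq_inv_smul_iff]
  simp only [Units.neg_smul, mul_smul, smul_add, smul_neg, neg_add]

variable [DecidableEq G]

def balancedFn (X : Finset G) (p : ℝ) (g : G) : ℝ := (if g ∈ X then 1 else 0) - p

lemma sum_balancedFn_mul_addChar [Fintype G] (X : Finset G) (p : ℝ) (χ : AddChar G ℂ) :
    ∑ g, (balancedFn X p g : ℂ) * χ g = ∑ g ∈ X, χ g - p * ∑ g, χ g := by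
  simp [balancedFn, apply_ite ((↑) : ℝ → ℂ), sub_mul, sum_sub_distrib, mul_sum]

lemma card_filter_units_smul_sub_eq_sum (u₀ u₁ u₂ : ℤˣ) (X Y : Finset G) (p : ℝ) (g : G) :
    (#{q ∈ X ×ˢ Y | (u₀ : ℤ) • g + (u₁ : ℤ) • q.1 + (u₂ : ℤ) • q.2 = 0} : ℝ) - p * #Y
      = ∑ y ∈ Y, balancedFn X p (-(u₁⁻¹ * u₀) • g + -(u₁⁻¹ * u₂) • y) := by
  simp only [card_filter, sum_product_right, units_int_smul_add_eq_zero_iff, sum_ite_eq',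
    balancedFn, sum_sub_distrib, sum_const, nsmul_eq_mul, mul_comm p]
  push_cast
  rfl

lemma sum_sq_sum_balancedFn_le [Fintype G] {X : Finset G} {p T : ℝ}
    (hX : ∀ χ : AddChar G ℂ, ‖∑ g ∈ X, χ g - p * ∑ g, χ g‖ ≤ T) (τ σ : ℤˣ) (Y : Finset G) :
    ∑ g, (∑ y ∈ Y, balancedFn X p (τ • g + σ • y)) ^ 2 ≤ T ^ 2 * Fintype.card G := by
  have hS : ∀ c, ∑ y ∈ Y, balancedFn X p (c + σ • y)
      = ∑ s ∈ Y.image (σ • ·), balancedFn X p (c + s) :=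
    fun c => (sum_image (f := fun s => balancedFn X p (c + s))
      fun _ _ _ _ h => MulAction.injective σ h).symm
  calc ∑ g, (∑ y ∈ Y, balancedFn X p (τ • g + σ • y)) ^ 2
      = ∑ c, (∑ y ∈ Y, balancedFn X p (c + σ • y)) ^ 2 :=
        Fintype.sum_equiv (MulAction.toPerm τ) _ _ fun _ => rfl
    _ = ∑ c, ‖∑ s ∈ Y.image (σ • ·), (balancedFn X p (c + s) : ℂ)‖ ^ 2 := by
        simp only [hS, ← Complex.ofReal_sum, Complex.norm_real, Real.norm_eq_abs, sq_abs]
    _ ≤ T ^ 2 * #(Y.image (σ • ·)) :=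
        sum_norm_sum_translate_sq_le (ν := fun g => (balancedFn X p g : ℂ))
          (fun χ => by rw [sum_balancedFn_mul_addChar]; exact hX χ) _
    _ ≤ T ^ 2 * Fintype.card G := by gcongr; exact card_le_univ _

lemma card_not_forall_sign_le [Fintype G] {X : Finset G} {p T r : ℝ} (hr : 0 < r)
    (hX : ∀ χ : AddChar G ℂ, ‖∑ g ∈ X, χ g - p * ∑ g, χ g‖ ≤ T) (Y : Finset G) :
    (#{g | ¬ ∀ e₀ e₁ e₂ : ℤ, (e₀ = 1 ∨ e₀ = -1) → (e₁ = 1 ∨ e₁ = -1) → (e₂ = 1 ∨ e₂ = -1) →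
        |(#{q ∈ X ×ˢ Y | e₀ • g + e₁ • q.1 + e₂ • q.2 = 0} : ℝ) - p * #Y| ≤ r} : ℝ)
      ≤ 8 * (T ^ 2 * Fintype.card G / r ^ 2) := by
  let bad : ℤˣ × ℤˣ × ℤˣ → Finset G := fun u =>
    {g | r < |∑ y ∈ Y, balancedFn X p (-(u.2.1⁻¹ * u.1) • g + -(u.2.1⁻¹ * u.2.2) • y)|}
  have hsub : ({g | ¬ ∀ e₀ e₁ e₂ : ℤ, (e₀ = 1 ∨ e₀ = -1) → (e₁ = 1 ∨ e₁ = -1) →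
      (e₂ = 1 ∨ e₂ = -1) → |(#{q ∈ X ×ˢ Y | e₀ • g + e₁ • q.1 + e₂ • q.2 = 0} : ℝ) - p * #Y| ≤ r}
      : Finset G) ⊆ univ.biUnion bad := by
    intro g hg
    simp only [mem_filter, mem_univ, true_and] at hg
    push Not at hg
    obtain ⟨e₀, e₁, e₂, h₀, h₁, h₂, hlt⟩ := hg
    obtain ⟨u₀, rfl⟩ := Int.isUnit_iff.mpr h₀
    obtain ⟨u₁, rfl⟩ := Int.isUnit_iff.mpr h₁
    obtain ⟨u₂, rfl⟩ := Int.isUnit_iff.mpr h₂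
    rw [card_filter_units_smul_sub_eq_sum] at hlt
    exact mem_biUnion.mpr ⟨(u₀, u₁, u₂), mem_univ _, mem_filter.mpr ⟨mem_univ _, hlt⟩⟩
  have hbad : ∀ u, (#(bad u) : ℝ) ≤ T ^ 2 * Fintype.card G / r ^ 2 := fun u =>
    (card_lt_abs_le_sum_sq_div _ hr).trans
      (div_le_div_of_nonneg_right (sum_sq_sum_balancedFn_le hX _ _ Y) (by positivity))
  calc (#_ : ℝ) ≤ #(univ.biUnion bad) := Nat.cast_le.mpr (card_le_card hsub)
    _ ≤ ∑ u, (#(bad u) : ℝ) := by exact_mod_cast card_biUnion_le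
    _ ≤ ∑ _u : ℤˣ × ℤˣ × ℤˣ, T ^ 2 * Fintype.card G / r ^ 2 := sum_le_sum fun u _ => hbad u
    _ = 8 * (T ^ 2 * Fintype.card G / r ^ 2) := by
        simp [Fintype.card_prod, Fintype.card_units_int]

lemma one_sub_le_randomSubsetProb_forall_addChar_norm_le [Fintype G] {p : ℝ} (hp0 : 0 ≤ p)
    (hp1 : p ≤ 1) {T : ℝ} (hT0 : 0 ≤ T) (hT : T ≤ 4 * Fintype.card G) :
    1 - 4 * Fintype.card G * exp (-(T ^ 2 / (16 * Fintype.card G)))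
      ≤ randomSubsetProb G p (fun X => ∀ χ : AddChar G ℂ, ‖∑ g ∈ X, χ g - p * ∑ g, χ g‖ ≤ T) := by
  have hunion : randomSubsetProb G p
      (fun X => ∃ χ : AddChar G ℂ, T < ‖∑ g ∈ X, χ g - p * ∑ g, χ g‖)
      ≤ ∑ _χ : AddChar G ℂ, 4 * exp (-(T ^ 2 / (16 * Fintype.card G))) :=
    (randomSubsetProb_exists_le hp0 hp1 _).trans (sum_le_sum fun χ _ =>
      randomSubsetProb_lt_norm_le hp0 hp1 (fun g => (AddChar.norm_apply χ g).le) hT0 hT)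
  rw [sum_const, card_univ, AddChar.card_eq, nsmul_eq_mul] at hunion
  calc 1 - 4 * Fintype.card G * exp (-(T ^ 2 / (16 * Fintype.card G)))
      ≤ 1 - randomSubsetProb G p
          (fun X => ∃ χ : AddChar G ℂ, T < ‖∑ g ∈ X, χ g - p * ∑ g, χ g‖) := by
        linarith
    _ = _ := by rw [← randomSubsetProb_not]; simp only [not_exists, not_lt]

end SignedCounts

lemma eventually_four_mul_exp_le :
    ∀ᶠ m : ℝ in atTop, 4 * m ^ 20 * exp (-((m ^ 17) ^ 2 / (16 * m ^ 20))) ≤ 8 / (m ^ 20) ^ 3 := by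
  have hdecay : Tendsto (fun m : ℝ => (m ^ 14 / 16) ^ 6 * exp (-(m ^ 14 / 16))) atTop (𝓝 0) :=
    (tendsto_pow_mul_exp_neg_atTop_nhds_zero 6).comp
      ((tendsto_pow_atTop (by norm_num)).atTop_div_const (by norm_num))
  filter_upwards [hdecay.eventually_lt_const (by norm_num : (0 : ℝ) < 2 / 16 ^ 6),
    eventually_ge_atTop 1] with m hsmall hm
  have hm0 : 0 < m := by linarith
  have hexpo : (m ^ 17) ^ 2 / (16 * m ^ 20) = m ^ 14 / 16 := by field_simp
  rw [hexpo, le_div_iff₀ (by positivity)]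
  have h84 : m ^ 84 * exp (-(m ^ 14 / 16)) < 2 := by
    rw [div_pow, ← pow_mul] at hsmall
    rwa [div_mul_eq_mul_div, div_lt_div_iff_of_pos_right (by norm_num)] at hsmall
  have h80 : m ^ 80 ≤ m ^ 84 := pow_le_pow_right₀ hm (by norm_num)
  calc 4 * m ^ 20 * exp (-(m ^ 14 / 16)) * (m ^ 20) ^ 3 = 4 * (m ^ 80 * exp (-(m ^ 14 / 16))) := by
        ring
    _ ≤ 4 * (m ^ 84 * exp (-(m ^ 14 / 16))) := by gcongr
    _ ≤ 8 := by linarith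

/-- Near-regularity from one random set: with probability at least `1 - 8/n³`, for every
`Y ⊆ G` all but at most `8·n^(9/10)` elements `g ∈ G` satisfy that, for every choice of
signs, the number of pairs `(x, y) ∈ X × Y` with `±g ± x ± y = 0` is `p·|Y| ± n^(9/10)`. -/
theorem one_random_set_nearly_regular :
    ∃ N : ℕ,
      ∀ (G : Type) [AddCommGroup G] [Fintype G] [DecidableEq G], ∀ p : ℝ,
      N ≤ Fintype.card G →
      (Fintype.card G : ℝ) ^ (-(1 : ℝ) / 600) ≤ p → p ≤ 1 →
      1 - 8 / (Fintype.card G : ℝ) ^ 3 ≤ ∑ X : Finset G,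
        (if (∀ Y : Finset G,
              ((Finset.univ.filter (fun g : G =>
                  ¬ ∀ e₀ e₁ e₂ : ℤ,
                    (e₀ = 1 ∨ e₀ = -1) → (e₁ = 1 ∨ e₁ = -1) → (e₂ = 1 ∨ e₂ = -1) →
                    |(((X ×ˢ Y).filter
                        (fun q : G × G => e₀ • g + e₁ • q.1 + e₂ • q.2 = 0)).card : ℝ)
                      - p * Y.card|
                      ≤ (Fintype.card G : ℝ) ^ ((9 : ℝ) / 10))).card : ℝ)
                ≤ 8 * (Fintype.card G : ℝ) ^ ((9 : ℝ) / 10))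
        then setProb G p X else 0) := by
  have hm_tendsto : Tendsto (fun n : ℕ => (n : ℝ) ^ ((1 : ℝ) / 20)) atTop atTop :=
    (tendsto_rpow_atTop (by norm_num)).comp tendsto_natCast_atTop_atTop
  obtain ⟨N, hN⟩ := eventually_atTop.mp <|
    hm_tendsto.eventually (eventually_four_mul_exp_le.and (eventually_ge_atTop 1))
  refine ⟨N, fun G _ _ _ p hNG hp_low hp1 => ?_⟩
  obtain ⟨m, hm⟩ : ∃ m : ℝ, m = (Fintype.card G : ℝ) ^ ((1 : ℝ) / 20) := ⟨_, rfl⟩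
  obtain ⟨hexp, hm1⟩ : 4 * m ^ 20 * exp (-((m ^ 17) ^ 2 / (16 * m ^ 20))) ≤ 8 / (m ^ 20) ^ 3
      ∧ 1 ≤ m := hm ▸ hN _ hNG
  have hp0 : 0 ≤ p := (rpow_nonneg (Nat.cast_nonneg _) _).trans hp_low
  -- every power of `n = |G|` that occurs is an integer power of `m = n ^ (1/20)`
  have hpow : ∀ k : ℕ, (Fintype.card G : ℝ) ^ ((k : ℝ) / 20) = m ^ k := fun k => by
    rw [hm, ← rpow_mul_natCast (Nat.cast_nonneg _)]; ring_nf
  have hn : (Fintype.card G : ℝ) = m ^ 20 := by rw [← hpow 20]; norm_num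
  have hr : (Fintype.card G : ℝ) ^ ((9 : ℝ) / 10) = m ^ 18 := by rw [← hpow 18]; norm_num
  calc 1 - 8 / (Fintype.card G : ℝ) ^ 3
      ≤ 1 - 4 * Fintype.card G * exp (-((m ^ 17) ^ 2 / (16 * Fintype.card G))) := by
        rw [hn]; linarith
    _ ≤ randomSubsetProb G p
          (fun X => ∀ χ : AddChar G ℂ, ‖∑ g ∈ X, χ g - p * ∑ g, χ g‖ ≤ m ^ 17) :=
        one_sub_le_randomSubsetProb_forall_addChar_norm_le hp0 hp1 (by positivity)
          (by rw [hn]; nlinarith [pow_le_pow_right₀ hm1 (by norm_num : 17 ≤ 20)])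
    _ ≤ _ := randomSubsetProb_mono hp0 hp1 fun X hX Y =>
        (card_not_forall_sign_le (by rw [hr]; positivity) hX Y).trans
          (le_of_eq (by rw [hr, hn]; field_simp))
end

section
/- There is an absolute constant C such that for every δ > 0 there is N ∈ ℕ with the following property. Let G be a finite abelian group (written additively) of order n ≥ N, let k be an integer with 3 ≤ k ≤ (log n)^{10}, let p be a real with n^{−1/700} ≤ p ≤ 1, and let R₁, R₂ be independent p-random subsets of G. Then with probability at least 1 − δ both of the following hold. (1) For every U ⊆ G with |U| ≤ p^{300}·n/C, all u, v ∈ G, and every integer k' with 2 ≤ k' ≤ k: if u ≠ v, there exist elements x₀ = u, x₁, …, x_{k'} = v, pairwise distinct, with x₁,…,x_{k'−1} ∈ R₁ ∖ U, such that the k' colours x_{i−1} − x_i (1 ≤ i ≤ k') are pairwise distinct and lie in R₂ ∖ U; if u = v and k' ≥ 3, there exist pairwise distinct elements x₀ = v, x₁, …, x_{k'−1} with x₁,…,x_{k'−1} ∈ R₁ ∖ U such that, setting x_{k'} = v, the k' colours x_{i−1} − x_i are pairwise distinct and lie in R₂ ∖ U. (2) For every U ⊆ G with |U| ≤ p^{300}·n/(4C)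 and every V ⊆ G with |V| ≤ p^{300}·n/(4kC), there is a family of |V| sequences (v₁,…,v_k) of distinct elements of G, with pairwise disjoint vertex sets and pairwise disjoint colour sets, such that each sequence contains exactly one element of V and its remaining k−1 elements lie in (R₁ ∖ U) ∖ V, and for each sequence the k colours v_i − v_{i+1} (indices mod k) are pairwise distinct and lie in R₂ ∖ U. -/
open scoped Classical

/-!
Call `x` a good middle vertex for `w ≠ z` if `x ∈ R₁`, `w - x, x - z ∈ R₂` and `w - x ≠ x - z`.
The reflection `x ↦ w + z - x` swaps these two colours and moves at least half of the group, so
one point from each of its two-element orbits gives at least `n / 4` vertices `x` whose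
conditions `x ∈ R₁, w - x ∈ R₂, x - z ∈ R₂` involve disjoint sets of coordinates of the random
pair, hence are independent events of probability `p³`.
A Chernoff bound and a union bound over the pairs `(w, z)` show that with high probability every
pair has at least `p³ n / 16` good middle vertices. Everything else is greedy: deleting a vertex
and a colour destroys at most three good middle vertices of each pair, so paths are grown one
edge at a time and finished through a good middle vertex of the last two endpoints, a cycle is a
path closed by one edge, and the cycles through `V` are built one after the other, each avoiding
the vertices and colours already used. Since `p³ n ≥ n ^ (697 / 700)` and
`k ≤ (log n) ^ 10`, all these budgets fit once `n` is large.
-/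

open Finset Filter

section RandomSubset

variable {Λ : Type} [Fintype Λ] [DecidableEq Λ]

lemma setProb_eq_prod (p : ℝ) (S : Finset Λ) :
    setProb Λ p S = ∏ l, if l ∈ S then p else 1 - p := by
  rw [prod_ite, prod_const, prod_const, filter_mem_eq_inter, univ_inter,
    filter_notMem_eq_sdiff, ← compl_eq_univ_sdiff, card_compl, setProb]

lemma setProb_nonneg_s17 {p : ℝ} (hp₀ : 0 ≤ p) (hp₁ : p ≤ 1) (S : Finset Λ) : 0 ≤ setProb Λ p S :=
  mul_nonneg (pow_nonneg hp₀ _) (pow_nonneg (sub_nonneg.2 hp₁) _)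

lemma sum_setProb_mul_prod_ite (p : ℝ) (a b : Λ → ℝ) :
    ∑ S, setProb Λ p S * ∏ l, (if l ∈ S then a l else b l)
      = ∏ l, (p * a l + (1 - p) * b l) := by
  rw [Fintype.prod_add]
  refine sum_congr rfl fun S _ => ?_
  rw [setProb_eq_prod, ← prod_mul_distrib, ← prod_mul_prod_compl S]
  congr 1 <;> refine prod_congr rfl fun l hl => ?_
  · simp [hl]
  · simp [mem_compl.1 hl]

lemma sum_setProb_s17 (p : ℝ) : ∑ S, setProb Λ p S = 1 := by
  simpa using sum_setProb_mul_prod_ite (Λ := Λ) p 1 1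

lemma sum_setProb_mul_ite_subset (p : ℝ) (A : Finset Λ) :
    ∑ S, setProb Λ p S * (if A ⊆ S then 1 else 0) = p ^ #A := by
  have h : ∀ S : Finset Λ, (if A ⊆ S then (1 : ℝ) else 0)
      = ∏ l, if l ∈ S then 1 else if l ∈ A then 0 else 1 := by
    intro S
    split_ifs with hAS
    · exact (prod_eq_one fun l _ => by split_ifs <;> simp_all [subset_iff]).symm
    · obtain ⟨l, hlA, hlS⟩ := not_subset.1 hAS
      exact (prod_eq_zero (mem_univ l) (by simp [hlA, hlS])).symm
  simp_rw [h, sum_setProb_mul_prod_ite]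
  rw [prod_congr rfl (g := fun l => if l ∈ A then p else 1) fun l _ => by split_ifs <;> ring,
    Fintype.prod_ite_mem, prod_const]

lemma sum_setProb_mul_prod_ite_subset {ι : Type} (p : ℝ) (X : Finset ι) (T : ι → Finset Λ)
    (hT : (X : Set ι).PairwiseDisjoint T) (c : ℝ) :
    ∑ S, setProb Λ p S * ∏ x ∈ X, (if T x ⊆ S then c else 1)
      = ∏ x ∈ X, ((c - 1) * p ^ #(T x) + 1) := by
  have expand : ∀ S : Finset Λ, ∏ x ∈ X, (if T x ⊆ S then c else 1)
      = ∑ t ∈ X.powerset, (∏ x ∈ t, (c - 1)) * (if t.biUnion T ⊆ S then 1 else 0) := by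
    intro S
    have := prod_add (fun x => (c - 1) * (if T x ⊆ S then 1 else 0)) (fun _ => 1) X
    simp only [prod_const_one, mul_one, prod_mul_distrib, prod_boole] at this
    simp only [biUnion_subset, ← this]
    exact prod_congr rfl fun x _ => by split_ifs <;> ring
  simp_rw [expand, mul_sum]
  rw [sum_comm]
  simp_rw [mul_left_comm _ (∏ x ∈ _, (c - 1)), ← mul_sum, sum_setProb_mul_ite_subset]
  have := prod_add (fun x => (c - 1) * p ^ #(T x)) (fun _ => 1) X
  simp only [prod_const_one, mul_one] at this
  rw [this]
  refine sum_congr rfl fun t ht => ?_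
  rw [card_biUnion (hT.subset (mem_powerset.1 ht)), ← prod_pow_eq_pow_sum, prod_mul_distrib]

/-- Chernoff bound: Markov's inequality for `exp (θ - #{x ∈ X | T x ⊆ S})`. -/
lemma sum_setProb_mul_ite_card_lt_le {ι : Type} {p : ℝ} (hp₀ : 0 ≤ p) (hp₁ : p ≤ 1) (X : Finset ι)
    (T : ι → Finset Λ) (hT : (X : Set ι).PairwiseDisjoint T) (θ : ℝ) :
    ∑ S, setProb Λ p S * (if (#{x ∈ X | T x ⊆ S} : ℝ) < θ then 1 else 0)
      ≤ Real.exp (θ - (∑ x ∈ X, p ^ #(T x)) / 2) := by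
  have he : Real.exp (-1) - 1 ≤ -1 / 2 := by
    have : (1 / 2 : ℝ)⁻¹ ≤ Real.exp 1 := by norm_num; linarith [Real.add_one_le_exp 1]
    linarith [Real.exp_neg 1 ▸ inv_le_of_inv_le₀ (by norm_num) this]
  have markov : ∀ S : Finset Λ, (if (#{x ∈ X | T x ⊆ S} : ℝ) < θ then 1 else 0)
      ≤ Real.exp θ * ∏ x ∈ X, (if T x ⊆ S then Real.exp (-1) else 1) := by
    intro S
    rw [prod_ite, prod_const_one, mul_one, prod_const, ← Real.exp_nat_mul, ← Real.exp_add]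
    split_ifs with h
    · exact Real.one_le_exp (by linarith)
    · positivity
  calc ∑ S, setProb Λ p S * (if (#{x ∈ X | T x ⊆ S} : ℝ) < θ then 1 else 0)
      ≤ ∑ S, setProb Λ p S * (Real.exp θ * ∏ x ∈ X, (if T x ⊆ S then Real.exp (-1) else 1)) :=
        sum_le_sum fun S _ => mul_le_mul_of_nonneg_left (markov S) (setProb_nonneg_s17 hp₀ hp₁ S)
    _ = Real.exp θ * ∏ x ∈ X, ((Real.exp (-1) - 1) * p ^ #(T x) + 1) := by
        simp_rw [mul_left_comm _ (Real.exp θ), ← mul_sum, sum_setProb_mul_prod_ite_subset p X T hT]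
    _ ≤ Real.exp θ * ∏ x ∈ X, Real.exp (-(p ^ #(T x) / 2)) := by
        refine mul_le_mul_of_nonneg_left (prod_le_prod (fun x _ => ?_) fun x _ => ?_)
          (Real.exp_nonneg θ)
        · have : p ^ #(T x) ≤ 1 := pow_le_one₀ hp₀ hp₁
          nlinarith [Real.exp_pos (-1), pow_nonneg hp₀ #(T x)]
        · nlinarith [Real.add_one_le_exp (-(p ^ #(T x) / 2)), pow_nonneg hp₀ #(T x)]
    _ = Real.exp (θ - (∑ x ∈ X, p ^ #(T x)) / 2) := by
        rw [← Real.exp_sum, ← Real.exp_add, sum_div, sum_neg_distrib, ← sub_eq_add_neg]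

lemma one_sub_sum_le_sum_setProb_mul_ite_forall {κ : Type} {p : ℝ} (hp₀ : 0 ≤ p) (hp₁ : p ≤ 1)
    (Q : Finset κ) (B : κ → Finset Λ → Prop) :
    1 - ∑ q ∈ Q, ∑ S, setProb Λ p S * (if B q S then 1 else 0)
      ≤ ∑ S, setProb Λ p S * (if ∀ q ∈ Q, ¬ B q S then 1 else 0) := by
  have union : ∀ S, 1 - ∑ q ∈ Q, (if B q S then 1 else 0)
      ≤ (if ∀ q ∈ Q, ¬ B q S then (1 : ℝ) else 0) := by
    intro S
    split_ifs with h
    · linarith [sum_nonneg fun q (_ : q ∈ Q) => (by positivity : (0 : ℝ) ≤ if B q S then 1 else 0)]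
    · push Not at h
      obtain ⟨q, hq, hB⟩ := h
      have := single_le_sum (f := fun q => if B q S then (1 : ℝ) else 0)
        (fun q _ => by positivity) hq
      simp only [hB, if_true] at this
      linarith
  calc 1 - ∑ q ∈ Q, ∑ S, setProb Λ p S * (if B q S then 1 else 0)
      = ∑ S, setProb Λ p S * (1 - ∑ q ∈ Q, if B q S then 1 else 0) := by
        simp_rw [mul_sub, mul_one, mul_sum, sum_sub_distrib, sum_setProb_s17, sum_comm (s := Q)]
    _ ≤ _ := sum_le_sum fun S _ => mul_le_mul_of_nonneg_left (union S) (setProb_nonneg_s17 hp₀ hp₁ S)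

variable {α β : Type} [Fintype α] [DecidableEq α] [Fintype β] [DecidableEq β]

lemma setProb_eq_mul_toLeft_toRight (p : ℝ) (S : Finset (α ⊕ β)) :
    setProb (α ⊕ β) p S = setProb α p S.toLeft * setProb β p S.toRight := by
  simp only [setProb_eq_prod, Fintype.prod_sum_type, mem_toLeft, mem_toRight]

lemma sum_sum_setProb_mul_setProb (p : ℝ) (F : Finset α → Finset β → ℝ) :
    ∑ R₁, ∑ R₂, setProb α p R₁ * setProb β p R₂ * F R₁ R₂
      = ∑ S : Finset (α ⊕ β), setProb (α ⊕ β) p S * F S.toLeft S.toRight := by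
  rw [← Fintype.sum_prod_type', ← sumEquiv.toEquiv.sum_comp]
  simp [setProb_eq_mul_toLeft_toRight]

-- The decidability instances are implicit so that they unify with those of the caller's `if`s.
lemma sum_sum_setProb_mul_ite_le {p : ℝ} (hp₀ : 0 ≤ p) (hp₁ : p ≤ 1)
    {E P : Finset α → Finset β → Prop}
    {_ : ∀ R₁ R₂, Decidable (E R₁ R₂)} {_ : ∀ R₁ R₂, Decidable (P R₁ R₂)}
    (h : ∀ R₁ R₂, E R₁ R₂ → P R₁ R₂) :
    ∑ R₁, ∑ R₂, setProb α p R₁ * setProb β p R₂ * (if E R₁ R₂ then 1 else 0)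
      ≤ ∑ R₁, ∑ R₂, if P R₁ R₂ then setProb α p R₁ * setProb β p R₂ else 0 := by
  refine sum_le_sum fun R₁ _ => sum_le_sum fun R₂ _ => ?_
  by_cases hE : E R₁ R₂
  · rw [if_pos hE, mul_one, if_pos (h R₁ R₂ hE)]
  · rw [if_neg hE, mul_zero]
    split_ifs
    · exact mul_nonneg (setProb_nonneg_s17 hp₀ hp₁ R₁) (setProb_nonneg_s17 hp₀ hp₁ R₂)
    · exact le_rfl

end RandomSubset

section RainbowPaths

variable {G : Type} [AddCommGroup G]

def goodMiddles [DecidableEq G] (A B : Finset G) (w z : G) : Finset G :=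
  {x ∈ A | w - x ∈ B ∧ x - z ∈ B ∧ w - x ≠ x - z}

def pathColours {m : ℕ} (x : Fin (m + 1) → G) (i : Fin m) : G := x i.castSucc - x i.succ

def IsRainbowPath (A B : Finset G) (u v : G) {m : ℕ} (x : Fin (m + 1) → G) : Prop :=
  x 0 = u ∧ x (Fin.last m) = v ∧ Function.Injective x ∧
    (∀ i : Fin (m + 1), i ≠ 0 → i ≠ Fin.last m → x i ∈ A) ∧
    Function.Injective (pathColours x) ∧ ∀ i, pathColours x i ∈ B

def IsRainbowCycle (A B : Finset G) (v : G) {k : ℕ} (y : ZMod k → G) : Prop :=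
  y 0 = v ∧ Function.Injective y ∧ (∀ i : ZMod k, i ≠ 0 → y i ∈ A) ∧
    Function.Injective (fun i : ZMod k => y i - y (i + 1)) ∧ ∀ i : ZMod k, y i - y (i + 1) ∈ B

def IsRainbowCycleFamily (A B V : Finset G) {k : ℕ} (f : G → ZMod k → G) : Prop :=
  (∀ v ∈ V, IsRainbowCycle A B v (f v)) ∧
    (∀ v ∈ V, ∀ v' ∈ V, v ≠ v' → ∀ i i', f v i ≠ f v' i') ∧
    ∀ v ∈ V, ∀ v' ∈ V, v ≠ v' → ∀ i i', f v i - f v (i + 1) ≠ f v' i' - f v' (i' + 1)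

variable {A B : Finset G}

lemma card_goodMiddles_le_sdiff_add [DecidableEq G] (A B F F' : Finset G) (w z : G) :
    #(goodMiddles A B w z) ≤ #(goodMiddles (A \ F) (B \ F') w z) + #F + 2 * #F' := by
  have hsub : goodMiddles A B w z ⊆ goodMiddles (A \ F) (B \ F') w z ∪ F ∪
      (F'.image (w - ·) ∪ F'.image (· + z)) := by
    intro x hx
    simp only [goodMiddles, mem_filter, Finset.mem_sdiff, mem_union, mem_image] at hx ⊢
    by_cases hxF : x ∈ F
    · tauto
    by_cases h₁ : w - x ∈ F'
    · exact Or.inr (Or.inl ⟨w - x, h₁, sub_sub_cancel w x⟩)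
    by_cases h₂ : x - z ∈ F'
    · exact Or.inr (Or.inr ⟨x - z, h₂, sub_add_cancel x z⟩)
    tauto
  calc #(goodMiddles A B w z)
      ≤ #(goodMiddles (A \ F) (B \ F') w z) + #F + (#F' + #F') :=
        (card_le_card hsub).trans ((card_union_le _ _).trans (add_le_add (card_union_le _ _)
          ((card_union_le _ _).trans (add_le_add card_image_le card_image_le))))
    _ = _ := by ring

lemma card_goodMiddles_le_sdiff_singleton_add [DecidableEq G] (A B : Finset G) (x c w z : G) :
    #(goodMiddles A B w z) ≤ #(goodMiddles (A \ {x}) (B \ {c}) w z) + 3 := by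
  simpa using card_goodMiddles_le_sdiff_add A B {x} {c} w z

lemma pathColours_cons {m : ℕ} (u : G) (y : Fin (m + 1) → G) :
    pathColours (Fin.cons u y : Fin (m + 2) → G) = Fin.cons (u - y 0) (pathColours y) := by
  ext i
  refine Fin.cases rfl (fun j => ?_) i
  simp [pathColours]

lemma sub_add_one_eq_snoc_pathColours {m : ℕ} (P : Fin (m + 1) → G) (i : Fin (m + 1)) :
    P i - P (i + 1) = (Fin.snoc (pathColours P) (P (Fin.last m) - P 0) : Fin (m + 1) → G) i := by
  refine Fin.lastCases ?_ (fun j => ?_) i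
  · simp
  · simp [pathColours, Fin.coeSucc_eq_succ]

lemma IsRainbowPath.mono {A' B' : Finset G} {u v : G} {m : ℕ} {x : Fin (m + 1) → G}
    (hx : IsRainbowPath A B u v x) (hA : A ⊆ A') (hB : B ⊆ B') : IsRainbowPath A' B' u v x :=
  ⟨hx.1, hx.2.1, hx.2.2.1, fun i h₀ h₁ => hA (hx.2.2.2.1 i h₀ h₁), hx.2.2.2.2.1,
    fun i => hB (hx.2.2.2.2.2 i)⟩

lemma IsRainbowCycle.mono {A' B' : Finset G} {v : G} {k : ℕ} {y : ZMod k → G}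
    (hy : IsRainbowCycle A B v y) (hA : A ⊆ A') (hB : B ⊆ B') : IsRainbowCycle A' B' v y :=
  ⟨hy.1, hy.2.1, fun i hi => hA (hy.2.2.1 i hi), hy.2.2.2.1, fun i => hB (hy.2.2.2.2 i)⟩

lemma isRainbowPath_edge {u v : G} (huv : u ≠ v) (h : u - v ∈ B) :
    IsRainbowPath A B u v ![u, v] := by
  refine ⟨rfl, rfl, fun i j hij => ?_, fun i h₀ h₁ => ?_,
    Function.injective_of_subsingleton _, fun i => ?_⟩
  · fin_cases i <;> fin_cases j <;> simp_all [eq_comm]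
  · fin_cases i <;> simp_all
  · fin_cases i; exact h

lemma IsRainbowPath.cons [DecidableEq G] {m : ℕ} {u x v : G} {y : Fin (m + 1) → G}
    (hy : IsRainbowPath (A \ {x}) (B \ {u - x}) x v y) (hx : x ∈ A) (hux : u - x ∈ B)
    (hu : u ∉ A) (huv : u ≠ v) : IsRainbowPath A B u v (Fin.cons u y : Fin (m + 2) → G) := by
  obtain ⟨hy₀, hy_last, hy_inj, hy_mem, hc_inj, hc_mem⟩ := hy
  have hyA : ∀ j, j ≠ Fin.last m → y j ∈ A := by
    intro j hj
    by_cases hj₀ : j = 0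
    · rwa [hj₀, hy₀]
    · exact (mem_sdiff.1 (hy_mem j hj₀ hj)).1
  refine ⟨rfl, by simpa [← Fin.succ_last] using hy_last, Fin.cons_injective_iff.2 ⟨?_, hy_inj⟩,
    fun i hi₀ hi => ?_, ?_, fun i => ?_⟩
  · rintro ⟨j, hj⟩
    by_cases hj_last : j = Fin.last m
    · exact huv (hj ▸ hj_last ▸ hy_last)
    · exact hu (hj ▸ hyA j hj_last)
  · obtain ⟨j, rfl⟩ := Fin.exists_succ_eq.2 hi₀
    exact hyA j (by simpa [← Fin.succ_last] using hi)
  · rw [pathColours_cons, hy₀]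
    refine Fin.cons_injective_iff.2 ⟨fun ⟨j, hj⟩ => ?_, hc_inj⟩
    simpa [hj] using hc_mem j
  · rw [pathColours_cons, hy₀]
    exact Fin.cases hux (fun j => (mem_sdiff.1 (hc_mem j)).1) i

lemma IsRainbowPath.isRainbowCycle [DecidableEq G] {m : ℕ} {v t : G} {P : Fin (m + 1) → G}
    (hP : IsRainbowPath (A \ {t}) (B \ {t - v}) v t P) (ht : t ∈ A) (htv : t - v ∈ B) :
    IsRainbowCycle A B v (fun i : ZMod (m + 1) => P i) := by
  obtain ⟨hP₀, hP_last, hP_inj, hP_mem, hc_inj, hc_mem⟩ := hP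
  have hcolours := sub_add_one_eq_snoc_pathColours P
  rw [hP₀, hP_last] at hcolours
  -- `ZMod (m + 1)` is `Fin (m + 1)` by definition.
  show P 0 = v ∧ Function.Injective P ∧ (∀ i : Fin (m + 1), i ≠ 0 → P i ∈ A) ∧
    Function.Injective (fun i : Fin (m + 1) => P i - P (i + 1)) ∧
    ∀ i : Fin (m + 1), P i - P (i + 1) ∈ B
  refine ⟨hP₀, hP_inj, fun i hi => ?_, ?_, fun i => ?_⟩
  · by_cases hi_last : i = Fin.last m
    · rwa [hi_last, hP_last]
    · exact (mem_sdiff.1 (hP_mem i hi hi_last)).1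
  · simp_rw [hcolours]
    exact Fin.snoc_injective_iff.2 ⟨hc_inj, fun ⟨j, hj⟩ => by simpa [hj] using hc_mem j⟩
  · rw [hcolours]
    exact Fin.lastCases (by simpa using htv) (fun j => by simpa using (mem_sdiff.1 (hc_mem j)).1) i

theorem exists_isRainbowPath [DecidableEq G] {m : ℕ} (hm : 2 ≤ m)
    (hAB : ∀ w z, w ≠ z → 3 * m ≤ #(goodMiddles A B w z)) {u v : G} (huv : u ≠ v)
    (hu : u ∉ A) (hv : v ∉ A) : ∃ x : Fin (m + 1) → G, IsRainbowPath A B u v x := by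
  induction m, hm using Nat.le_induction generalizing A B u with
  | base =>
    obtain ⟨x, hx⟩ := (card_pos (s := goodMiddles A B u v)).1 (by have := hAB u v huv; omega)
    obtain ⟨hxA, hux, hxv, hne⟩ := mem_filter.1 hx
    exact ⟨_, (isRainbowPath_edge (fun h : x = v => hv (h ▸ hxA))
      (mem_sdiff.2 ⟨hxv, by simpa using hne.symm⟩)).cons hxA hux hu huv⟩
  | succ m hm ih =>
    obtain ⟨x, hx⟩ := (card_pos (s := goodMiddles A B u v)).1 (by have := hAB u v huv; omega)
    obtain ⟨hxA, hux, -, -⟩ := mem_filter.1 hx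
    obtain ⟨y, hy⟩ := ih (A := A \ {x}) (B := B \ {u - x}) (u := x)
      (fun w z hwz => by
        have := hAB w z hwz
        have := card_goodMiddles_le_sdiff_singleton_add A B x (u - x) w z
        omega)
      (fun h => hv (h ▸ hxA)) (by simp) (by simp [hv])
    exact ⟨_, hy.cons hxA hux hu huv⟩

theorem exists_isRainbowCycle [DecidableEq G] [Nontrivial G] {k : ℕ} (hk : 3 ≤ k)
    (hAB : ∀ w z, w ≠ z → 3 * k ≤ #(goodMiddles A B w z)) {v : G} (hv : v ∉ A) :
    ∃ y : ZMod k → G, IsRainbowCycle A B v y := by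
  obtain ⟨m, rfl⟩ : ∃ m, k = m + 1 := ⟨k - 1, by omega⟩
  obtain ⟨z, hz⟩ := exists_ne v
  obtain ⟨t, ht⟩ := (card_pos (s := goodMiddles A B z v)).1 (by have := hAB z v hz; omega)
  obtain ⟨htA, -, htv, -⟩ := mem_filter.1 ht
  obtain ⟨P, hP⟩ := exists_isRainbowPath (A := A \ {t}) (B := B \ {t - v}) (m := m) (by omega)
    (fun w z hwz => by
      have := hAB w z hwz
      have := card_goodMiddles_le_sdiff_singleton_add A B t (t - v) w z
      omega)
    (fun h : v = t => hv (h ▸ htA)) (by simp [hv]) (by simp)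
  exact ⟨_, hP.isRainbowCycle htA htv⟩

end RainbowPaths

section FamilyVertices

variable {G : Type} [DecidableEq G] {k : ℕ} [NeZero k]

def familyVertices (s : Finset G) (f : G → ZMod k → G) : Finset G :=
  s.biUnion fun v => univ.image (f v)

lemma card_familyVertices_le (s : Finset G) (f : G → ZMod k → G) :
    #(familyVertices s f) ≤ #s * k :=
  card_biUnion_le_card_mul _ _ _ fun _ _ => card_image_le.trans (by simp [ZMod.card])

end FamilyVertices

section Family

variable {G : Type} [AddCommGroup G] [DecidableEq G] {A B : Finset G} {k : ℕ}

def familyColours [NeZero k] (s : Finset G) (f : G → ZMod k → G) : Finset G :=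
  s.biUnion fun v => univ.image fun i => f v i - f v (i + 1)

lemma card_familyColours_le [NeZero k] (s : Finset G) (f : G → ZMod k → G) :
    #(familyColours s f) ≤ #s * k :=
  card_biUnion_le_card_mul _ _ _ fun _ _ => card_image_le.trans (by simp [ZMod.card])

lemma IsRainbowCycleFamily.insert [NeZero k] {s : Finset G} {f : G → ZMod k → G} {a : G}
    {y : ZMod k → G} (hf : IsRainbowCycleFamily A B s f) (ha : a ∉ s) (haA : a ∉ A)
    (hy : IsRainbowCycle (A \ familyVertices s f) (B \ familyColours s f) a y) :
    IsRainbowCycleFamily A B (insert a s) (Function.update f a y) := by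
  obtain ⟨hf_cyc, hf_vert, hf_col⟩ := hf
  have hy_vert : ∀ v ∈ s, ∀ i i', y i ≠ f v i' := by
    intro v hv i i' h
    by_cases hi : i = 0
    · rw [hi, hy.1] at h
      by_cases hi' : i' = 0
      · exact ha (by rwa [h, hi', (hf_cyc v hv).1])
      · exact haA (h ▸ (hf_cyc v hv).2.2.1 i' hi')
    · exact (mem_sdiff.1 (hy.2.2.1 i hi)).2
        (h ▸ mem_biUnion.2 ⟨v, hv, mem_image_of_mem _ (mem_univ _)⟩)
  have hy_col : ∀ v ∈ s, ∀ i i', y i - y (i + 1) ≠ f v i' - f v (i' + 1) := fun v hv i i' h =>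
    (mem_sdiff.1 (hy.2.2.2.2 i)).2 (h ▸ mem_biUnion.2 ⟨v, hv, mem_image_of_mem _ (mem_univ _)⟩)
  have hf_old : ∀ v ∈ s, Function.update f a y v = f v := fun v hv =>
    Function.update_of_ne (by rintro rfl; exact ha hv) _ _
  refine ⟨fun v hv => ?_, fun v hv v' hv' hne i i' => ?_, fun v hv v' hv' hne i i' => ?_⟩
  · rcases mem_insert.1 hv with rfl | hv
    · simpa using hy.mono sdiff_subset sdiff_subset
    · simpa [hf_old v hv] using hf_cyc v hv
  · rcases mem_insert.1 hv with rfl | hvs <;> rcases mem_insert.1 hv' with rfl | hv's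
    · exact absurd rfl hne
    · simpa [hf_old v' hv's] using hy_vert v' hv's i i'
    · simpa [hf_old v hvs] using (hy_vert v hvs i' i).symm
    · simpa [hf_old v hvs, hf_old v' hv's] using hf_vert v hvs v' hv's hne i i'
  · rcases mem_insert.1 hv with rfl | hvs <;> rcases mem_insert.1 hv' with rfl | hv's
    · exact absurd rfl hne
    · simpa [hf_old v' hv's] using hy_col v' hv's i i'
    · simpa [hf_old v hvs] using (hy_col v hvs i' i).symm
    · simpa [hf_old v hvs, hf_old v' hv's] using hf_col v hvs v' hv's hne i i'

theorem exists_isRainbowCycleFamily [Nontrivial G] (hk : 3 ≤ k)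
    {V : Finset G} (hVA : Disjoint V A)
    (hAB : ∀ w z, w ≠ z → 3 * k * (#V + 1) ≤ #(goodMiddles A B w z)) :
    ∃ f : G → ZMod k → G, IsRainbowCycleFamily A B V f := by
  have : NeZero k := ⟨by omega⟩
  induction V using Finset.induction_on with
  | empty => exact ⟨fun _ _ => 0, by simp [IsRainbowCycleFamily]⟩
  | insert a s ha ih =>
    obtain ⟨f, hf⟩ := ih (disjoint_of_subset_left (subset_insert a s) hVA)
      (fun w z hwz => (Nat.mul_le_mul_left _ (by simp [card_insert_of_notMem ha])).trans
        (hAB w z hwz))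
    have haA : a ∉ A := disjoint_left.1 hVA (mem_insert_self a s)
    obtain ⟨y, hy⟩ := exists_isRainbowCycle (A := A \ familyVertices s f)
      (B := B \ familyColours s f) hk
      (fun w z hwz => by
        have := hAB w z hwz
        have := card_goodMiddles_le_sdiff_add A B (familyVertices s f) (familyColours s f) w z
        have := card_familyVertices_le s f
        have := card_familyColours_le s f
        rw [card_insert_of_notMem ha] at *
        nlinarith)
      (fun h => haA (mem_sdiff.1 h).1)
    exact ⟨_, hf.insert ha haA hy⟩

end Family

lemma exists_transversal_of_involutive {α : Type} [Fintype α] [DecidableEq α] {σ : α → α}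
    (hσ : Function.Involutive σ) :
    ∃ X : Finset α, #{x | σ x ≠ x} = 2 * #X ∧ ∀ x ∈ X, σ x ∉ X := by
  let _ : LinearOrder α := LinearOrder.lift' _ (Fintype.equivFin α).injective
  set X : Finset α := {x | x < σ x}
  have hX : ∀ x ∈ X, σ x ∉ X := fun x hx hσx =>
    lt_asymm (mem_filter.1 hx).2 (by simpa [hσ x] using (mem_filter.1 hσx).2)
  have hsplit : ({x | σ x ≠ x} : Finset α) = X ∪ X.image σ := by
    ext x
    simp only [X, mem_filter, mem_univ, true_and, mem_union, mem_image]
    refine ⟨fun h => (lt_or_gt_of_ne h.symm).imp id fun h' => ⟨σ x, by rwa [hσ x], hσ x⟩, ?_⟩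
    rintro (h | ⟨y, hy, rfl⟩)
    · exact h.ne'
    · simpa [hσ y] using hy.ne
  refine ⟨X, ?_, hX⟩
  rw [hsplit, card_union_of_disjoint (disjoint_left.2 fun x hx hx' => ?_),
    card_image_of_injective _ hσ.injective, two_mul]
  obtain ⟨y, hy, rfl⟩ := mem_image.1 hx'
  exact hX y hy hx

section GoodMiddles

variable {G : Type} [AddCommGroup G] [DecidableEq G]

lemma two_mul_card_filter_add_self_eq_le [Fintype G] {w z : G} (hwz : w ≠ z) :
    2 * #{x : G | x + x = w + z} ≤ Fintype.card G := by
  by_cases h2 : ∀ y : G, y + y = 0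
  · have : ({x : G | x + x = w + z} : Finset G) = ∅ := by
      refine filter_eq_empty_iff.2 fun x _ hx => hwz ?_
      rw [h2 x, eq_comm, add_eq_zero_iff_eq_neg] at hx
      rw [hx, neg_eq_iff_add_eq_zero, h2]
    simp [this]
  · push Not at h2
    obtain ⟨y, hy⟩ := h2
    -- translation by `y` maps the solutions of `x + x = w + z` to non-solutions
    have hle : #{x : G | x + x = w + z} ≤ #(({x : G | x + x = w + z} : Finset G)ᶜ) := by
      refine card_le_card_of_injOn (· + y) (fun x hx => ?_) (add_left_injective y).injOn
      simp only [coe_filter, mem_univ, true_and, Set.mem_ofPred_eq, mem_coe, mem_compl,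
        mem_filter] at hx ⊢
      intro h
      apply hy
      rw [← hx] at h
      refine add_left_cancel (a := x + x) ?_
      calc x + x + (y + y) = x + y + (x + y) := by abel
        _ = x + x + 0 := by rw [h, add_zero]
    rw [card_compl] at hle
    omega

def colourTriple (w z x : G) : Finset (G ⊕ G) := {.inl x, .inr (w - x), .inr (x - z)}

lemma mem_goodMiddles_of_colourTriple_subset {w z x : G} {S : Finset (G ⊕ G)}
    (hS : colourTriple w z x ⊆ S) (hx : w - x ≠ x - z) :
    x ∈ goodMiddles S.toLeft S.toRight w z := by
  simp only [colourTriple, insert_subset_iff, singleton_subset_iff] at hS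
  exact mem_filter.2 ⟨mem_toLeft.2 hS.1, mem_toRight.2 hS.2.1, mem_toRight.2 hS.2.2, hx⟩

lemma exists_pairwiseDisjoint_colourTriple [Fintype G] {w z : G} (hwz : w ≠ z) :
    ∃ X : Finset G, Fintype.card G ≤ 4 * #X ∧ (∀ x ∈ X, w - x ≠ x - z) ∧
      (X : Set G).PairwiseDisjoint (colourTriple w z) := by
  have hfix : ∀ x, w - x = x - z ↔ w + z - x = x := fun x => by
    rw [sub_eq_sub_iff_add_eq_add, sub_eq_iff_eq_add]
  obtain ⟨X, hX_card, hX⟩ := exists_transversal_of_involutive (σ := fun x : G => w + z - x)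
    fun x => sub_sub_cancel _ _
  have hX_ne : ∀ x ∈ X, w - x ≠ x - z := fun x hx h => hX x hx (by rwa [(hfix x).1 h])
  refine ⟨X, ?_, hX_ne, fun x hx x' hx' hne => ?_⟩
  · have h₁ := two_mul_card_filter_add_self_eq_le hwz
    have h₂ := card_filter_add_card_filter_not (s := univ) (p := fun x : G => w + z - x = x)
    simp only [ne_eq, sub_eq_iff_eq_add, eq_comm (a := w + z), card_univ] at h₂ hX_card
    omega
  · have hswap : ∀ a ∈ X, ∀ b ∈ X, w - a ≠ b - z := fun a ha b hb h => hX a ha (by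
      rwa [show w + z - a = b by rw [sub_eq_sub_iff_add_eq_add] at h; rw [h, add_sub_cancel_right]])
    simp only [colourTriple, Function.onFun, disjoint_insert_left, disjoint_insert_right,
      disjoint_singleton, mem_insert, mem_singleton, Sum.inl.injEq, Sum.inr.injEq, reduceCtorEq,
      sub_right_inj, sub_left_inj, or_false, false_or, not_false_eq_true, true_and, ne_eq, not_or]
    exact ⟨Ne.symm hne, ⟨Ne.symm hne, hswap x' hx' x hx⟩, hswap x hx x' hx', hne⟩

variable [Fintype G] {p : ℝ}

lemma sum_setProb_mul_ite_card_goodMiddles_lt_le (hp₀ : 0 ≤ p) (hp₁ : p ≤ 1) {w z : G}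
    (hwz : w ≠ z) :
    ∑ S : Finset (G ⊕ G), setProb (G ⊕ G) p S *
        (if (#(goodMiddles S.toLeft S.toRight w z) : ℝ) < p ^ 3 * Fintype.card G / 16 then 1
          else 0)
      ≤ Real.exp (-(p ^ 3 * Fintype.card G / 16)) := by
  set θ := p ^ 3 * Fintype.card G / 16
  obtain ⟨X, hX_card, hX_ne, hX⟩ := exists_pairwiseDisjoint_colourTriple hwz
  have hmono : ∀ S : Finset (G ⊕ G),
      #{x ∈ X | colourTriple w z x ⊆ S} ≤ #(goodMiddles S.toLeft S.toRight w z) :=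
    fun S => card_le_card fun x hx =>
      mem_goodMiddles_of_colourTriple_subset (mem_filter.1 hx).2 (hX_ne x (mem_filter.1 hx).1)
  calc _ ≤ ∑ S : Finset (G ⊕ G), setProb (G ⊕ G) p S *
        (if (#{x ∈ X | colourTriple w z x ⊆ S} : ℝ) < θ then 1 else 0) := by
        refine sum_le_sum fun S _ => mul_le_mul_of_nonneg_left ?_ (setProb_nonneg_s17 hp₀ hp₁ S)
        split_ifs with h₁ h₂ h₂
        · exact le_rfl
        · exact absurd ((Nat.cast_le.2 (hmono S)).trans_lt h₁) h₂
        · exact zero_le_one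
        · exact le_rfl
    _ ≤ Real.exp (θ - (∑ x ∈ X, p ^ #(colourTriple w z x)) / 2) :=
        sum_setProb_mul_ite_card_lt_le hp₀ hp₁ X _ hX θ
    _ ≤ Real.exp (-θ) := by
        rw [sum_congr rfl fun x hx => (by simp [colourTriple, hX_ne x hx] :
          p ^ #(colourTriple w z x) = p ^ 3), sum_const, nsmul_eq_mul]
        gcongr
        have : (Fintype.card G : ℝ) ≤ 4 * #X := by exact_mod_cast hX_card
        simp only [θ]
        nlinarith [pow_nonneg hp₀ 3]

lemma one_sub_card_sq_mul_exp_le (hp₀ : 0 ≤ p) (hp₁ : p ≤ 1) :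
    1 - (Fintype.card G : ℝ) ^ 2 * Real.exp (-(p ^ 3 * Fintype.card G / 16))
      ≤ ∑ R₁ : Finset G, ∑ R₂ : Finset G, setProb G p R₁ * setProb G p R₂ *
          (if ∀ w z, w ≠ z → p ^ 3 * Fintype.card G / 16 ≤ #(goodMiddles R₁ R₂ w z) then 1
            else 0) := by
  set θ := p ^ 3 * Fintype.card G / 16
  have hbad : ∑ q ∈ (univ : Finset G).offDiag, ∑ S : Finset (G ⊕ G), setProb (G ⊕ G) p S *
      (if (#(goodMiddles S.toLeft S.toRight q.1 q.2) : ℝ) < θ then 1 else 0)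
        ≤ (Fintype.card G : ℝ) ^ 2 * Real.exp (-θ) := by
    refine (sum_le_card_nsmul _ _ _ fun q hq =>
      sum_setProb_mul_ite_card_goodMiddles_lt_le hp₀ hp₁ (mem_offDiag.1 hq).2.2).trans ?_
    rw [nsmul_eq_mul, offDiag_card, card_univ]
    gcongr
    rw [sq, ← Nat.cast_mul]
    exact Nat.cast_le.2 (Nat.sub_le _ _)
  rw [sum_sum_setProb_mul_setProb]
  refine (sub_le_sub_left hbad 1).trans
    ((one_sub_sum_le_sum_setProb_mul_ite_forall hp₀ hp₁ _ _).trans_eq ?_)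
  simp [not_lt]

end GoodMiddles

section Budgets

variable {G : Type} [AddCommGroup G] [DecidableEq G] {R₁ R₂ U : Finset G} {θ : ℝ}

lemma exists_isRainbowPath_sdiff (hgood : ∀ w z, w ≠ z → θ ≤ #(goodMiddles R₁ R₂ w z))
    {m : ℕ} (hm : 2 ≤ m) (hθ : 3 * #U + 3 * m + 2 ≤ θ) {u v : G} (huv : u ≠ v) :
    ∃ x : Fin (m + 1) → G, IsRainbowPath (R₁ \ U) (R₂ \ U) u v x := by
  obtain ⟨x, hx⟩ := exists_isRainbowPath (A := R₁ \ insert u (insert v U)) (B := R₂ \ U) hm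
    (fun w z hwz => by
      have : 3 * #U + 3 * m + 2 ≤ #(goodMiddles R₁ R₂ w z) := by
        exact_mod_cast hθ.trans (hgood w z hwz)
      have := card_goodMiddles_le_sdiff_add R₁ R₂ (insert u (insert v U)) U w z
      have := card_insert_le u (insert v U)
      have := card_insert_le v U
      omega)
    huv (by simp) (by simp)
  exact ⟨x, hx.mono (sdiff_subset_sdiff subset_rfl ((subset_insert _ _).trans (subset_insert _ _)))
    subset_rfl⟩

lemma exists_isRainbowCycle_sdiff [Nontrivial G]
    (hgood : ∀ w z, w ≠ z → θ ≤ #(goodMiddles R₁ R₂ w z)) {k : ℕ} (hk : 3 ≤ k)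
    (hθ : 3 * #U + 3 * k + 1 ≤ θ) (v : G) :
    ∃ y : ZMod k → G, IsRainbowCycle (R₁ \ U) (R₂ \ U) v y := by
  obtain ⟨y, hy⟩ := exists_isRainbowCycle (A := R₁ \ insert v U) (B := R₂ \ U) (v := v) hk
    (fun w z hwz => by
      have : 3 * #U + 3 * k + 1 ≤ #(goodMiddles R₁ R₂ w z) := by
        exact_mod_cast hθ.trans (hgood w z hwz)
      have := card_goodMiddles_le_sdiff_add R₁ R₂ (insert v U) U w z
      have := card_insert_le v U
      omega)
    (by simp)
  exact ⟨y, hy.mono (sdiff_subset_sdiff subset_rfl (subset_insert v U)) subset_rfl⟩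

lemma exists_isRainbowCycleFamily_sdiff [Nontrivial G]
    (hgood : ∀ w z, w ≠ z → θ ≤ #(goodMiddles R₁ R₂ w z)) {k : ℕ} (hk : 3 ≤ k) {V : Finset G}
    (hθ : 3 * #U + #V + 3 * k * (#V + 1) ≤ θ) :
    ∃ f : G → ZMod k → G, IsRainbowCycleFamily ((R₁ \ U) \ V) (R₂ \ U) V f :=
  exists_isRainbowCycleFamily hk disjoint_sdiff fun w z hwz => by
    have : 3 * #U + #V + 3 * k * (#V + 1) ≤ #(goodMiddles R₁ R₂ w z) := by
      exact_mod_cast hθ.trans (hgood w z hwz)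
    have := card_goodMiddles_le_sdiff_add R₁ R₂ (U ∪ V) U w z
    have := card_union_le U V
    rw [sdiff_sdiff_left, sup_eq_union]
    omega

end Budgets

lemma sqrt_le_pow_three_mul {n p : ℝ} (hn : 1 ≤ n) (hp : n ^ (-(1 : ℝ) / 700) ≤ p) :
    √n ≤ p ^ 3 * n := by
  have hn₀ : 0 < n := by linarith
  calc √n = n ^ (1 / 2 : ℝ) := Real.sqrt_eq_rpow n
    _ ≤ n ^ (697 / 700 : ℝ) := Real.rpow_le_rpow_of_exponent_le hn (by norm_num)
    _ = (n ^ (-(1 : ℝ) / 700)) ^ 3 * n := by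
        rw [← Real.rpow_natCast, ← Real.rpow_mul hn₀.le, ← Real.rpow_add_one hn₀.ne']
        norm_num
    _ ≤ p ^ 3 * n := by gcongr

lemma eventually_log_pow_lt_sqrt :
    ∀ᶠ n : ℕ in atTop, 3 * Real.log n ^ 10 + 2 < √(n : ℝ) / 20 := by
  suffices h : ∀ᶠ x : ℝ in atTop, 3 * Real.log x ^ 10 + 2 < √x / 20 from
    tendsto_natCast_atTop_atTop.eventually h
  have hlog := (isLittleO_log_rpow_rpow_atTop 10 (by norm_num : (0 : ℝ) < 1 / 2)).bound
    (by norm_num : (0 : ℝ) < 1 / 120)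
  filter_upwards [hlog, eventually_gt_atTop (6400 : ℝ)] with x hx hx'
  have hsqrt : 80 < √x := by
    rw [show (80 : ℝ) = √6400 by
      rw [show (6400 : ℝ) = 80 ^ 2 by norm_num, Real.sqrt_sq (by norm_num)]]
    exact Real.sqrt_lt_sqrt (by norm_num) hx'
  rw [Real.norm_eq_abs, Real.norm_eq_abs, ← Real.sqrt_eq_rpow, abs_of_nonneg (Real.sqrt_nonneg x),
    show (10 : ℝ) = (10 : ℕ) by norm_num, Real.rpow_natCast] at hx
  linarith [le_abs_self (Real.log x ^ 10)]

lemma eventually_sq_mul_exp_le {δ : ℝ} (hδ : 0 < δ) :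
    ∀ᶠ n : ℕ in atTop, (n : ℝ) ^ 2 * Real.exp (-(√(n : ℝ) / 16)) ≤ δ := by
  suffices h : ∀ᶠ x : ℝ in atTop, x ^ 2 * Real.exp (-(√x / 16)) ≤ δ from
    tendsto_natCast_atTop_atTop.eventually h
  have h := ((Real.tendsto_pow_mul_exp_neg_atTop_nhds_zero 4).comp
    (Real.tendsto_sqrt_atTop.atTop_div_const (by norm_num : (0 : ℝ) < 16))).const_mul (16 ^ 4)
  rw [mul_zero] at h
  filter_upwards [h.eventually (Iic_mem_nhds hδ), eventually_ge_atTop 0] with x hx hx₀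
  refine le_of_eq_of_le ?_ hx
  simp only [Function.comp_apply]
  rw [div_pow, show √x ^ 4 = (√x ^ 2) ^ 2 by ring, Real.sq_sqrt hx₀]
  ring

/-- Exhausting vertices: with high probability, (1) rainbow paths/cycles of any length
`2 ≤ k' ≤ k` between prescribed vertices can be found avoiding any small forbidden set
`U`, and (2) any small vertex set `V` can be saturated by vertex- and colour-disjoint
rainbow `k`-cycles, each using exactly one vertex of `V`. -/
theorem exhausting_vertices :
    ∃ C : ℝ, 0 < C ∧ ∀ δ : ℝ, 0 < δ → ∃ N : ℕ,
      ∀ (G : Type) [AddCommGroup G] [Fintype G] [DecidableEq G], ∀ (k : ℕ) (p : ℝ),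
      N ≤ Fintype.card G →
      3 ≤ k → (k : ℝ) ≤ (Real.log (Fintype.card G)) ^ 10 →
      (Fintype.card G : ℝ) ^ (-(1 : ℝ) / 700) ≤ p → p ≤ 1 →
      1 - δ ≤ ∑ R₁ : Finset G, ∑ R₂ : Finset G,
        (if ((∀ U : Finset G,
              ((U.card : ℝ) ≤ p ^ 300 * Fintype.card G / C) →
              ∀ u v : G, ∀ k' : ℕ, 2 ≤ k' → k' ≤ k →
              (u ≠ v → ∃ x : Fin (k' + 1) → G,
                x 0 = u ∧ x (Fin.last k') = v ∧ Function.Injective x ∧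
                (∀ i : Fin (k' + 1), i ≠ 0 → i ≠ Fin.last k' → x i ∈ R₁ \ U) ∧
                Function.Injective (fun i : Fin k' => x i.castSucc - x i.succ) ∧
                (∀ i : Fin k', x i.castSucc - x i.succ ∈ R₂ \ U)) ∧
              (u = v → 3 ≤ k' → ∃ y : ZMod k' → G,
                y 0 = v ∧ Function.Injective y ∧
                (∀ i : ZMod k', i ≠ 0 → y i ∈ R₁ \ U) ∧
                Function.Injective (fun i : ZMod k' => y i - y (i + 1)) ∧
                (∀ i : ZMod k', y i - y (i + 1) ∈ R₂ \ U))) ∧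
            (∀ U : Finset G,
              ((U.card : ℝ) ≤ p ^ 300 * Fintype.card G / (4 * C)) →
              ∀ V : Finset G,
              ((V.card : ℝ) ≤ p ^ 300 * Fintype.card G / (4 * k * C)) →
              ∃ f : {x : G // x ∈ V} → ZMod k → G,
                (∀ v, f v 0 = ↑v) ∧
                (∀ v, ∀ i : ZMod k, i ≠ 0 → f v i ∈ (R₁ \ U) \ V) ∧
                (∀ v, Function.Injective (f v)) ∧
                (∀ v v', v ≠ v' → ∀ i i', f v i ≠ f v' i') ∧
                (∀ v, Function.Injective (fun i : ZMod k => f v i - f v (i + 1))) ∧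
                (∀ v i, f v i - f v (i + 1) ∈ R₂ \ U) ∧
                (∀ v v', v ≠ v' → ∀ i i',
                  f v i - f v (i + 1) ≠ f v' i' - f v' (i' + 1))))
        then setProb G p R₁ * setProb G p R₂ else 0) := by
  -- Every budget below is at most `3 p³ n / 400 + 3 k + 2`, and `3 k + 2 < √n / 20 ≤ p³ n / 20`.
  refine ⟨400, by norm_num, fun δ hδ => ?_⟩
  obtain ⟨N, hN⟩ := eventually_atTop.1 ((eventually_log_pow_lt_sqrt.and
    (eventually_sq_mul_exp_le hδ)).and (eventually_ge_atTop 2))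
  refine ⟨N, fun G _ _ _ k p hNG hk hk_log hp hp₁ => ?_⟩
  obtain ⟨⟨hlog, hexp⟩, hn₂⟩ := hN _ hNG
  have : Nontrivial G := Fintype.one_lt_card_iff_nontrivial.1 hn₂
  have hp₀ : 0 < p := (Real.rpow_pos_of_pos (by positivity) _).trans_le hp
  have hsqrt := sqrt_le_pow_three_mul (by exact_mod_cast hn₂.trans' one_le_two) hp
  have hp300 : p ^ 300 * Fintype.card G ≤ p ^ 3 * Fintype.card G :=
    mul_le_mul_of_nonneg_right (pow_le_pow_of_le_one hp₀.le hp₁ (by norm_num)) (by positivity)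
  have hexp' : (Fintype.card G : ℝ) ^ 2 * Real.exp (-(p ^ 3 * Fintype.card G / 16)) ≤ δ :=
    hexp.trans' (by gcongr)
  refine (sub_le_sub_left hexp' 1).trans ((one_sub_card_sq_mul_exp_le hp₀.le hp₁).trans
    (sum_sum_setProb_mul_ite_le hp₀.le hp₁ fun R₁ R₂ hgood =>
      ⟨fun U hU u v k' hk' hk'k => ⟨fun huv => exists_isRainbowPath_sdiff hgood hk' ?path huv,
        fun _ hk'₃ => exists_isRainbowCycle_sdiff hgood hk'₃ ?cycle v⟩, fun U hU V hV => ?family⟩))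
  case path => linarith [(Nat.cast_le.2 hk'k : (k' : ℝ) ≤ k)]
  case cycle => linarith [(Nat.cast_le.2 hk'k : (k' : ℝ) ≤ k)]
  case family =>
    have hVk : (#V : ℝ) * k ≤ p ^ 300 * Fintype.card G / 1600 := by
      rw [le_div_iff₀ (by positivity)] at hV ⊢
      linarith
    have hV₁ : (#V : ℝ) ≤ #V * k :=
      le_mul_of_one_le_right (by positivity) (by exact_mod_cast hk.trans' (by norm_num))
    obtain ⟨f, hf, hvert, hcol⟩ :=
      exists_isRainbowCycleFamily_sdiff (U := U) (V := V) hgood hk (by linarith)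
    exact ⟨fun v => f v, fun v => (hf v v.2).1, fun v => (hf v v.2).2.2.1, fun v => (hf v v.2).2.1,
      fun v v' hne => hvert v v.2 v' v'.2 (Subtype.coe_ne_coe.2 hne),
      fun v => (hf v v.2).2.2.2.1, fun v => (hf v v.2).2.2.2.2,
      fun v v' hne => hcol v v.2 v' v'.2 (Subtype.coe_ne_coe.2 hne)⟩
end
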